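/- arXiv:alg-geom/9709017 — 4 statements merged into one kernel-verified Lean document; each statement's English description precedes it below -/
import Mathlib

section
/- Let z₁ < z₂ < z₃ be real numbers and α₁, α₂, α₃ > 0. Define U(t) = |t−z₁|^{α₁} |t−z₂|^{α₂} |t−z₃|^{α₃} and, for i = 1, 2 and the two intervals Δ₁ = [z₁,z₂], Δ₂ = [z₂,z₃], set M_{ij} = ∫_{Δ_j} α_i · U(t)/(t−z_i) dt (where 1/(t−z_i) is the signed rational function). Then det(M) = [Γ(α₁+1)Γ(α₂+1)Γ(α₃+1)/Γ(α₁+α₂+α₃+1)] · (z₂−z₁)^{α₁+α₂} (z₃−z₁)^{α₁+α₃} (z₃−z₂)^{α₂+α₃}. -/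
/-!
Expanding the determinant, `det M` is the integral over `Δ₁ × Δ₂` of
`f₁(t) f₂(s) - f₂(t) f₁(s)` with `fᵢ = αᵢ U / (· - zᵢ)`. For `P(τ) = (τ - t)(τ - s)` one has
`U(t) U(s) = ∏ |P(zᵢ)|^αᵢ`, and the integrand collapses to
`α₁ α₂ (z₂ - z₁) (s - t) |P(z₁)|^(α₁-1) |P(z₂)|^(α₂-1) |P(z₃)|^α₃`.
The Lagrange weights `P(zᵢ) / ∏_{j ≠ i} (zᵢ - zⱼ)` of the monic `P` sum to `1`, and they are
positive exactly when `t ∈ Δ₁`, `s ∈ Δ₂`: they map `Δ₁ × Δ₂` bijectively onto the open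
2-simplex, with Jacobian `(s - t) / ((z₂ - z₁)(z₃ - z₂)(z₃ - z₁))`, which absorbs the factor
`s - t`. What remains is the Dirichlet integral `Γ(α₁) Γ(α₃ + 1) Γ(α₂) / Γ(α₁ + α₂ + α₃ + 1)`,
which the substitution `(x, y) = (u v, u (1 - v))` splits into two Beta integrals.
-/

open MeasureTheory intervalIntegral Set

theorem integral_Ioo_rpow_mul_one_sub_rpow {p q : ℝ} (hp : 0 < p) (hq : 0 < q) :
    ∫ x in Ioo (0 : ℝ) 1, x ^ (p - 1) * (1 - x) ^ (q - 1) =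
      Real.Gamma p * Real.Gamma q / Real.Gamma (p + q) := by
  have hbeta := Complex.betaIntegral_eq_Gamma_mul_div (p : ℂ) q (by simpa) (by simpa)
  have hcast : Complex.betaIntegral p q =
      ((∫ x in (0 : ℝ)..1, x ^ (p - 1) * (1 - x) ^ (q - 1) : ℝ) : ℂ) := by
    rw [Complex.betaIntegral, ← intervalIntegral.integral_ofReal]
    refine intervalIntegral.integral_congr fun x hx => ?_
    rw [uIcc_of_le zero_le_one] at hx
    simp only [Complex.ofReal_mul, Complex.ofReal_cpow hx.1,
      Complex.ofReal_cpow (sub_nonneg.2 hx.2), Complex.ofReal_sub, Complex.ofReal_one]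
  rw [hcast, ← Complex.ofReal_add, Complex.Gamma_ofReal, Complex.Gamma_ofReal,
    Complex.Gamma_ofReal] at hbeta
  rw [← integral_Ioc_eq_integral_Ioo, ← intervalIntegral.integral_of_le zero_le_one]
  exact_mod_cast hbeta

theorem intervalIntegrable_abs_sub_rpow_div {α : ℝ} (hα : 0 < α) (c a b : ℝ) :
    IntervalIntegrable (fun t => |t - c| ^ α / (t - c)) volume a b := by
  have hloc : LocallyIntegrable (fun x : ℝ => |x| ^ α / x) := by
    refine locallyIntegrable_of_norm_le_rpow (C := 1) (α := 1 - α) (by simp) (by simp [hα])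
      (ae_of_all _ fun x => ?_)
      (by fun_prop : Measurable fun x : ℝ => |x| ^ α / x).aestronglyMeasurable
    rcases eq_or_ne x 0 with rfl | hx
    · simp [Real.rpow_nonneg]
    · rw [norm_div, Real.norm_eq_abs, Real.norm_eq_abs, abs_of_nonneg (by positivity), one_mul,
        neg_sub, Real.rpow_sub_one (abs_ne_zero.2 hx)]
  simpa using ((hloc.integrableOn_isCompact isCompact_uIcc).intervalIntegrable
    (a := a - c) (b := b - c)).comp_sub_right c

theorem det_integrals_eq_setIntegral_prod {α : Type*} [MeasurableSpace α] {μ : Measure α}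
    [SFinite μ] {I J : Set α} {f g : α → ℝ} (hfI : IntegrableOn f I μ) (hgI : IntegrableOn g I μ)
    (hfJ : IntegrableOn f J μ) (hgJ : IntegrableOn g J μ) :
    Matrix.det !![∫ t in I, f t ∂μ, ∫ s in J, f s ∂μ; ∫ t in I, g t ∂μ, ∫ s in J, g s ∂μ] =
      ∫ p in I ×ˢ J, (f p.1 * g p.2 - g p.1 * f p.2) ∂μ.prod μ := by
  rw [Matrix.det_fin_two_of, ← Measure.prod_restrict,
    integral_sub (hfI.mul_prod hgJ) (hgI.mul_prod hfJ), integral_prod_mul, integral_prod_mul]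
  ring

theorem integral_image_eq_integral_abs_det_mul_of_matrix {s : Set (ℝ × ℝ)} (hs : MeasurableSet s)
    {f : ℝ × ℝ → ℝ × ℝ} (J : ℝ × ℝ → Matrix (Fin 2) (Fin 2) ℝ)
    (hf : ∀ p ∈ s, HasFDerivAt f (LinearMap.toContinuousLinearMap
      (Matrix.toLin (Module.Basis.finTwoProd ℝ) (Module.Basis.finTwoProd ℝ) (J p))) p)
    (hinj : InjOn f s) (g : ℝ × ℝ → ℝ) :
    ∫ q in f '' s, g q = ∫ p in s, |(J p).det| * g (f p) := by
  rw [integral_image_eq_integral_abs_det_fderiv_smul volume hs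
    (fun p hp => (hf p hp).hasFDerivWithinAt) hinj g]
  simp only [LinearMap.det_toContinuousLinearMap, LinearMap.det_toLin, smul_eq_mul]

def openSimplex : Set (ℝ × ℝ) := {p | 0 < p.1 ∧ 0 < p.2 ∧ p.1 + p.2 < 1}

theorem measurableSet_openSimplex : MeasurableSet openSimplex :=
  (measurableSet_lt measurable_const measurable_fst).inter
    ((measurableSet_lt measurable_const measurable_snd).inter
      (measurableSet_lt (measurable_fst.add measurable_snd) measurable_const))

def simplexCoords (q : ℝ × ℝ) : ℝ × ℝ := (q.1 * q.2, q.1 * (1 - q.2))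

theorem hasFDerivAt_simplexCoords (p : ℝ × ℝ) :
    HasFDerivAt simplexCoords (LinearMap.toContinuousLinearMap (Matrix.toLin
      (Module.Basis.finTwoProd ℝ) (Module.Basis.finTwoProd ℝ) !![p.2, p.1; 1 - p.2, -p.1])) p := by
  rw [Matrix.toLin_finTwoProd_toContinuousLinearMap]
  have h₁ : HasFDerivAt (fun q : ℝ × ℝ => q.1) (ContinuousLinearMap.fst ℝ ℝ ℝ) p := hasFDerivAt_fst
  have h₂ : HasFDerivAt (fun q : ℝ × ℝ => q.2) (ContinuousLinearMap.snd ℝ ℝ ℝ) p := hasFDerivAt_snd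
  refine ((h₁.fun_mul h₂).prodMk (h₁.fun_mul ((hasFDerivAt_const 1 p).sub h₂))).congr_fderiv ?_
  ext <;> simp

theorem injOn_simplexCoords : InjOn simplexCoords (Ioo 0 1 ×ˢ Ioo 0 1) := by
  rintro ⟨u, v⟩ ⟨⟨hu, -⟩, -⟩ ⟨u', v'⟩ - h
  simp only [simplexCoords, Prod.mk.injEq] at h ⊢
  obtain ⟨h₁, h₂⟩ := h
  obtain rfl : u = u' := by linear_combination h₁ + h₂
  exact ⟨rfl, mul_left_cancel₀ hu.ne' h₁⟩

theorem image_simplexCoords : simplexCoords '' (Ioo 0 1 ×ˢ Ioo 0 1) = openSimplex := by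
  ext ⟨x, y⟩
  constructor
  · rintro ⟨⟨u, v⟩, ⟨⟨hu₀, hu₁⟩, ⟨hv₀, hv₁⟩⟩, h⟩
    simp only [simplexCoords, Prod.mk.injEq] at h
    obtain ⟨rfl, rfl⟩ := h
    exact ⟨mul_pos hu₀ hv₀, mul_pos hu₀ (by linarith), by linarith⟩
  · rintro ⟨hx, hy, hxy⟩
    have hs : 0 < x + y := by linarith
    refine ⟨(x + y, x / (x + y)), ⟨⟨hs, hxy⟩, div_pos hx hs, by rw [div_lt_one hs]; linarith⟩, ?_⟩
    simp only [simplexCoords, Prod.mk.injEq]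
    constructor <;> field_simp; ring

theorem integral_openSimplex_dirichlet {a b c : ℝ} (ha : 0 < a) (hb : 0 < b) (hc : 0 < c) :
    ∫ p in openSimplex, p.1 ^ (a - 1) * p.2 ^ (b - 1) * (1 - p.1 - p.2) ^ (c - 1) =
      Real.Gamma a * Real.Gamma b * Real.Gamma c / Real.Gamma (a + b + c) := by
  rw [← image_simplexCoords, integral_image_eq_integral_abs_det_mul_of_matrix
    (measurableSet_Ioo.prod measurableSet_Ioo) _ (fun p _ => hasFDerivAt_simplexCoords p)
    injOn_simplexCoords]
  have hsep : EqOn (fun p : ℝ × ℝ => |!![p.2, p.1; 1 - p.2, -p.1].det| *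
        ((simplexCoords p).1 ^ (a - 1) * (simplexCoords p).2 ^ (b - 1) *
          (1 - (simplexCoords p).1 - (simplexCoords p).2) ^ (c - 1)))
      (fun p => p.1 ^ (a + b - 1) * (1 - p.1) ^ (c - 1) * (p.2 ^ (a - 1) * (1 - p.2) ^ (b - 1)))
      (Ioo 0 1 ×ˢ Ioo 0 1) := by
    rintro ⟨u, v⟩ ⟨⟨hu₀, hu₁⟩, ⟨hv₀, hv₁⟩⟩
    have hdet : |!![v, u; 1 - v, -u].det| = u := by
      rw [Matrix.det_fin_two_of, abs_of_neg (by nlinarith)]; ring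
    simp only [simplexCoords, hdet]
    rw [Real.mul_rpow hu₀.le hv₀.le, Real.mul_rpow hu₀.le (by linarith),
      show a + b - 1 = 1 + (a - 1) + (b - 1) by ring, Real.rpow_add hu₀, Real.rpow_add hu₀,
      Real.rpow_one, show 1 - u * v - u * (1 - v) = 1 - u by ring]
    ring
  rw [setIntegral_congr_fun (measurableSet_Ioo.prod measurableSet_Ioo) hsep,
    Measure.volume_eq_prod, ← Measure.prod_restrict,
    integral_prod_mul (fun u => u ^ (a + b - 1) * (1 - u) ^ (c - 1))
      (fun v => v ^ (a - 1) * (1 - v) ^ (b - 1)),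
    integral_Ioo_rpow_mul_one_sub_rpow (by linarith) hc, integral_Ioo_rpow_mul_one_sub_rpow ha hb]
  have hΓ : Real.Gamma (a + b) ≠ 0 := (Real.Gamma_pos_of_pos (by linarith)).ne'
  field_simp

theorem integral_openSimplex_scaled_dirichlet {a b c l₁ l₂ l₃ : ℝ} (ha : 0 < a) (hb : 0 < b)
    (hc : 0 < c) (hl₁ : 0 ≤ l₁) (hl₂ : 0 ≤ l₂) (hl₃ : 0 ≤ l₃) :
    ∫ q in openSimplex, (l₁ * q.1) ^ (a - 1) * (l₂ * q.2) ^ (b - 1) *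
        (l₃ * (1 - q.1 - q.2)) ^ (c - 1) =
      l₁ ^ (a - 1) * l₂ ^ (b - 1) * l₃ ^ (c - 1) *
        (Real.Gamma a * Real.Gamma b * Real.Gamma c / Real.Gamma (a + b + c)) := by
  rw [← integral_openSimplex_dirichlet ha hb hc, ← MeasureTheory.integral_const_mul]
  refine setIntegral_congr_fun measurableSet_openSimplex fun q ⟨hx, hy, hxy⟩ => ?_
  rw [Real.mul_rpow hl₁ hx.le, Real.mul_rpow hl₂ hy.le, Real.mul_rpow hl₃ (by linarith)]
  ring

section RootsToSimplex

/-- For `P(τ) = (τ - p.1)(τ - p.2)`, the Lagrange weights `P(zᵢ) / ∏_{j ≠ i} (zᵢ - zⱼ)` at `z₁`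
and `z₃`; the weight at `z₂` is `1` minus their sum, since `P` is monic. -/
noncomputable def rootsToSimplex (z₁ z₂ z₃ : ℝ) (p : ℝ × ℝ) : ℝ × ℝ :=
  ((p.1 - z₁) * (p.2 - z₁) / ((z₂ - z₁) * (z₃ - z₁)),
    (z₃ - p.1) * (z₃ - p.2) / ((z₃ - z₂) * (z₃ - z₁)))

variable {z₁ z₂ z₃ : ℝ}

theorem rootsToSimplex_spec (h₁₂ : z₁ ≠ z₂) (h₂₃ : z₂ ≠ z₃) (h₁₃ : z₁ ≠ z₃) (p : ℝ × ℝ) :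
    (z₂ - z₁) * (z₃ - z₁) * (rootsToSimplex z₁ z₂ z₃ p).1 = (p.1 - z₁) * (p.2 - z₁) ∧
    (z₃ - z₂) * (z₃ - z₁) * (rootsToSimplex z₁ z₂ z₃ p).2 = (z₃ - p.1) * (z₃ - p.2) ∧
    (z₂ - z₁) * (z₃ - z₂) * (1 - (rootsToSimplex z₁ z₂ z₃ p).1 - (rootsToSimplex z₁ z₂ z₃ p).2) =
      (z₂ - p.1) * (p.2 - z₂) := by
  have := sub_ne_zero.2 h₁₂.symm
  have := sub_ne_zero.2 h₂₃.symm
  have := sub_ne_zero.2 h₁₃.symm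
  simp only [rootsToSimplex]
  refine ⟨by field_simp, by field_simp, ?_⟩
  field_simp
  ring

theorem hasFDerivAt_rootsToSimplex (z₁ z₂ z₃ : ℝ) (p : ℝ × ℝ) :
    HasFDerivAt (rootsToSimplex z₁ z₂ z₃)
      (LinearMap.toContinuousLinearMap (Matrix.toLin (Module.Basis.finTwoProd ℝ)
        (Module.Basis.finTwoProd ℝ)
        !![(p.2 - z₁) / ((z₂ - z₁) * (z₃ - z₁)), (p.1 - z₁) / ((z₂ - z₁) * (z₃ - z₁));
          -(z₃ - p.2) / ((z₃ - z₂) * (z₃ - z₁)), -(z₃ - p.1) / ((z₃ - z₂) * (z₃ - z₁))])) p := by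
  rw [Matrix.toLin_finTwoProd_toContinuousLinearMap]
  have h₁ : HasFDerivAt (fun q : ℝ × ℝ => q.1) (ContinuousLinearMap.fst ℝ ℝ ℝ) p := hasFDerivAt_fst
  have h₂ : HasFDerivAt (fun q : ℝ × ℝ => q.2) (ContinuousLinearMap.snd ℝ ℝ ℝ) p := hasFDerivAt_snd
  have hφ : rootsToSimplex z₁ z₂ z₃ = fun q =>
      ((q.1 - z₁) * (q.2 - z₁) * ((z₂ - z₁) * (z₃ - z₁))⁻¹,
        (z₃ - q.1) * (z₃ - q.2) * ((z₃ - z₂) * (z₃ - z₁))⁻¹) := by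
    funext q
    simp only [rootsToSimplex, div_eq_mul_inv]
  rw [hφ]
  refine ((((h₁.sub_const z₁).fun_mul (h₂.sub_const z₁)).mul_const
    ((z₂ - z₁) * (z₃ - z₁))⁻¹).prodMk ((((hasFDerivAt_const z₃ p).sub h₁).fun_mul
      ((hasFDerivAt_const z₃ p).sub h₂)).mul_const ((z₃ - z₂) * (z₃ - z₁))⁻¹)).congr_fderiv ?_
  ext <;> simp only [ContinuousLinearMap.prod_apply, ContinuousLinearMap.comp_apply,
    ContinuousLinearMap.inl_apply, ContinuousLinearMap.inr_apply, ContinuousLinearMap.coe_fst',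
    ContinuousLinearMap.coe_snd', add_apply, smul_apply, neg_apply, Pi.sub_apply, smul_add,
    smul_neg, smul_eq_mul, mul_inv_rev, div_eq_mul_inv, zero_sub, neg_sub, mul_zero, mul_one,
    zero_add, add_zero, neg_zero] <;> ring

theorem injOn_rootsToSimplex (h₁₂ : z₁ < z₂) (h₂₃ : z₂ < z₃) :
    InjOn (rootsToSimplex z₁ z₂ z₃) (Ioo z₁ z₂ ×ˢ Ioo z₂ z₃) := by
  rintro ⟨t, s⟩ ⟨ht, -⟩ ⟨t', s'⟩ ⟨-, hs'⟩ h
  obtain ⟨h₁, h₃, -⟩ := rootsToSimplex_spec h₁₂.ne h₂₃.ne (h₁₂.trans h₂₃).ne (t, s)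
  obtain ⟨h₁', h₃', -⟩ := rootsToSimplex_spec h₁₂.ne h₂₃.ne (h₁₂.trans h₂₃).ne (t', s')
  rw [h] at h₁ h₃
  have hsum : t + s = t' + s' := mul_left_cancel₀ (by linarith : z₃ - z₁ ≠ 0)
    (by linear_combination h₁' - h₁ - h₃' + h₃)
  have hprod : t * s = t' * s' := by linear_combination h₁' - h₁ + z₁ * hsum
  have ht' : t = t' := by
    have hts' : t - s' ≠ 0 := by linarith [ht.2, hs'.1]
    exact sub_eq_zero.1 <| (mul_eq_zero.1 (by linear_combination t * hsum - hprod :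
      (t - t') * (t - s') = 0)).resolve_right hts'
  exact Prod.ext ht' (by simp only; linarith)

theorem mapsTo_rootsToSimplex (h₁₂ : z₁ < z₂) (h₂₃ : z₂ < z₃) :
    MapsTo (rootsToSimplex z₁ z₂ z₃) (Ioo z₁ z₂ ×ˢ Ioo z₂ z₃) openSimplex := by
  rintro p ⟨⟨ht₁, ht₂⟩, ⟨hs₂, hs₃⟩⟩
  have hA : 0 < z₂ - z₁ := sub_pos.2 h₁₂
  have hB : 0 < z₃ - z₂ := sub_pos.2 h₂₃
  have hC : 0 < z₃ - z₁ := by linarith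
  obtain ⟨hx, hy, hxy⟩ := rootsToSimplex_spec h₁₂.ne h₂₃.ne (h₁₂.trans h₂₃).ne p
  have hx' : 0 < (rootsToSimplex z₁ z₂ z₃ p).1 := pos_of_mul_pos_right
    (by rw [hx]; exact mul_pos (by linarith) (by linarith)) (mul_pos hA hC).le
  have hy' : 0 < (rootsToSimplex z₁ z₂ z₃ p).2 := pos_of_mul_pos_right
    (by rw [hy]; exact mul_pos (by linarith) (by linarith)) (mul_pos hB hC).le
  have hxy' : 0 < 1 - (rootsToSimplex z₁ z₂ z₃ p).1 - (rootsToSimplex z₁ z₂ z₃ p).2 :=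
    pos_of_mul_pos_right (by rw [hxy]; exact mul_pos (by linarith) (by linarith))
      (mul_pos hA hB).le
  exact ⟨hx', hy', by linarith⟩

theorem openSimplex_subset_image_rootsToSimplex (h₁₂ : z₁ < z₂) (h₂₃ : z₂ < z₃) :
    openSimplex ⊆ rootsToSimplex z₁ z₂ z₃ '' (Ioo z₁ z₂ ×ˢ Ioo z₂ z₃) := by
  rintro ⟨x, y⟩ ⟨hx, hy, hxy⟩
  have hA : 0 < z₂ - z₁ := sub_pos.2 h₁₂
  have hB : 0 < z₃ - z₂ := sub_pos.2 h₂₃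
  have hC : 0 < z₃ - z₁ := by linarith
  -- `Q` is the monic quadratic whose Lagrange weights are `(x, 1 - x - y, y)`; its roots are
  -- the preimage.
  let Q : ℝ → ℝ := fun τ => (τ - z₁) * (τ - z₃) - (z₂ - z₁) * x * (τ - z₃) + (z₃ - z₂) * y * (τ - z₁)
  have hQ₁ : Q z₁ = (z₂ - z₁) * (z₃ - z₁) * x := by ring
  have hQ₂ : Q z₂ = -((z₂ - z₁) * (z₃ - z₂) * (1 - x - y)) := by ring
  have hQ₃ : Q z₃ = (z₃ - z₂) * (z₃ - z₁) * y := by ring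
  have hQ₂neg : Q z₂ < 0 := by
    rw [hQ₂, neg_lt_zero]; exact mul_pos (mul_pos hA hB) (by linarith)
  have hQcont : Continuous Q := by fun_prop
  obtain ⟨t, ht, hQt⟩ := intermediate_value_Ioo' h₁₂.le hQcont.continuousOn
    ⟨hQ₂neg, by rw [hQ₁]; positivity⟩
  obtain ⟨s, hs, hQs⟩ := intermediate_value_Ioo h₂₃.le hQcont.continuousOn
    ⟨hQ₂neg, by rw [hQ₃]; positivity⟩
  have hts : t - s ≠ 0 := by linarith [ht.2, hs.1]
  have hfactor (τ : ℝ) : Q τ = (τ - t) * (τ - s) := mul_left_cancel₀ hts <| by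
    linear_combination (τ - s) * hQt - (τ - t) * hQs
  refine ⟨(t, s), ⟨ht, hs⟩, ?_⟩
  simp only [rootsToSimplex, Prod.mk.injEq]
  constructor
  · rw [show (t - z₁) * (s - z₁) = Q z₁ by rw [hfactor]; ring, hQ₁]
    field_simp
  · rw [← hfactor, hQ₃]
    field_simp

theorem image_rootsToSimplex (h₁₂ : z₁ < z₂) (h₂₃ : z₂ < z₃) :
    rootsToSimplex z₁ z₂ z₃ '' (Ioo z₁ z₂ ×ˢ Ioo z₂ z₃) = openSimplex :=
  (mapsTo_rootsToSimplex h₁₂ h₂₃).image_subset.antisymm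
    (openSimplex_subset_image_rootsToSimplex h₁₂ h₂₃)

theorem integral_rect_eq_integral_openSimplex (h₁₂ : z₁ < z₂) (h₂₃ : z₂ < z₃)
    (g : ℝ × ℝ → ℝ) :
    ∫ p in Ioo z₁ z₂ ×ˢ Ioo z₂ z₃, (p.2 - p.1) * g (rootsToSimplex z₁ z₂ z₃ p) =
      (z₂ - z₁) * (z₃ - z₂) * (z₃ - z₁) * ∫ q in openSimplex, g q := by
  rw [← image_rootsToSimplex h₁₂ h₂₃, integral_image_eq_integral_abs_det_mul_of_matrix
    (measurableSet_Ioo.prod measurableSet_Ioo) _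
    (fun p _ => hasFDerivAt_rootsToSimplex z₁ z₂ z₃ p) (injOn_rootsToSimplex h₁₂ h₂₃),
    ← MeasureTheory.integral_const_mul]
  refine setIntegral_congr_fun (measurableSet_Ioo.prod measurableSet_Ioo) ?_
  rintro ⟨t, s⟩ ⟨⟨ht₁, ht₂⟩, ⟨hs₂, hs₃⟩⟩
  have hA : 0 < z₂ - z₁ := by linarith
  have hB : 0 < z₃ - z₂ := by linarith
  have hC : 0 < z₃ - z₁ := by linarith
  have hdet : !![(s - z₁) / ((z₂ - z₁) * (z₃ - z₁)), (t - z₁) / ((z₂ - z₁) * (z₃ - z₁));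
      -(z₃ - s) / ((z₃ - z₂) * (z₃ - z₁)), -(z₃ - t) / ((z₃ - z₂) * (z₃ - z₁))].det =
      -((s - t) / ((z₂ - z₁) * (z₃ - z₂) * (z₃ - z₁))) := by
    rw [Matrix.det_fin_two_of]
    field_simp
    ring
  have hpos : 0 < (s - t) / ((z₂ - z₁) * (z₃ - z₂) * (z₃ - z₁)) :=
    div_pos (by linarith) (by positivity)
  simp only [hdet, abs_neg, abs_of_pos hpos]
  field_simp

end RootsToSimplex

section ThreePointWeight

noncomputable def threePointWeight (z₁ z₂ z₃ α₁ α₂ α₃ t : ℝ) : ℝ :=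
  |t - z₁| ^ α₁ * |t - z₂| ^ α₂ * |t - z₃| ^ α₃

variable {z₁ z₂ z₃ α₁ α₂ α₃ : ℝ}

theorem intervalIntegrable_threePointWeight_div (hα₁ : 0 < α₁) (hα₂ : 0 ≤ α₂) (hα₃ : 0 ≤ α₃)
    (a b : ℝ) :
    IntervalIntegrable (fun t => threePointWeight z₁ z₂ z₃ α₁ α₂ α₃ t / (t - z₁)) volume a b := by
  have hg : Continuous fun t : ℝ => |t - z₂| ^ α₂ * |t - z₃| ^ α₃ :=
    ((continuous_abs.comp (continuous_sub_right z₂)).rpow_const fun _ => Or.inr hα₂).mul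
      ((continuous_abs.comp (continuous_sub_right z₃)).rpow_const fun _ => Or.inr hα₃)
  convert (intervalIntegrable_abs_sub_rpow_div hα₁ z₁ a b).mul_continuousOn hg.continuousOn
    using 1
  ext t
  simp only [threePointWeight]
  ring

theorem integrableOn_threePointWeight_div_sub_fst (hα₁ : 0 < α₁) (hα₂ : 0 ≤ α₂) (hα₃ : 0 ≤ α₃)
    (c a b : ℝ) :
    IntegrableOn (fun t => c * threePointWeight z₁ z₂ z₃ α₁ α₂ α₃ t / (t - z₁)) (Ioo a b) := by
  simpa only [mul_div_assoc] using
    ((intervalIntegrable_threePointWeight_div hα₁ hα₂ hα₃ a b).const_mul c).1.mono_set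
      Ioo_subset_Ioc_self

theorem integrableOn_threePointWeight_div_sub_snd (hα₁ : 0 ≤ α₁) (hα₂ : 0 < α₂) (hα₃ : 0 ≤ α₃)
    (c a b : ℝ) :
    IntegrableOn (fun t => c * threePointWeight z₁ z₂ z₃ α₁ α₂ α₃ t / (t - z₂)) (Ioo a b) := by
  have hswap : threePointWeight z₁ z₂ z₃ α₁ α₂ α₃ = threePointWeight z₂ z₁ z₃ α₂ α₁ α₃ := by
    ext t
    simp only [threePointWeight]
    ring
  rw [hswap]
  exact integrableOn_threePointWeight_div_sub_fst hα₂ hα₁ hα₃ c a b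

theorem threePointWeight_cross_eq {t s : ℝ} (ht : t ∈ Ioo z₁ z₂) (hs : s ∈ Ioo z₂ z₃) :
    let U := threePointWeight z₁ z₂ z₃ α₁ α₂ α₃
    α₁ * U t / (t - z₁) * (α₂ * U s / (s - z₂)) - α₂ * U t / (t - z₂) * (α₁ * U s / (s - z₁)) =
      α₁ * α₂ * (z₂ - z₁) * (s - t) * (((t - z₁) * (s - z₁)) ^ (α₁ - 1) *
        ((z₃ - t) * (z₃ - s)) ^ α₃ * ((z₂ - t) * (s - z₂)) ^ (α₂ - 1)) := by
  obtain ⟨ht₁, ht₂⟩ := ht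
  obtain ⟨hs₂, hs₃⟩ := hs
  have d₁ : 0 < t - z₁ := by linarith
  have d₂ : 0 < z₂ - t := by linarith
  have d₃ : 0 < z₃ - t := by linarith
  have e₁ : 0 < s - z₁ := by linarith
  have e₂ : 0 < s - z₂ := by linarith
  have e₃ : 0 < z₃ - s := by linarith
  simp only [threePointWeight, abs_of_pos d₁, abs_of_pos e₁, abs_of_pos e₂, abs_sub_comm t z₂,
    abs_sub_comm t z₃, abs_sub_comm s z₃, abs_of_pos d₂, abs_of_pos d₃, abs_of_pos e₃,
    Real.mul_rpow d₁.le e₁.le, Real.mul_rpow d₂.le e₂.le, Real.mul_rpow d₃.le e₃.le,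
    Real.rpow_sub_one d₁.ne', Real.rpow_sub_one e₁.ne', Real.rpow_sub_one d₂.ne',
    Real.rpow_sub_one e₂.ne']
  rw [show t - z₂ = -(z₂ - t) by ring]
  field_simp
  ring

/-- `α₁ α₂ (z₂ - z₁) |P(z₁)|^(α₁-1) |P(z₃)|^α₃ |P(z₂)|^(α₂-1)` for `P(τ) = (τ - t)(τ - s)`, written
in the coordinates `q = rootsToSimplex z₁ z₂ z₃ (t, s)`. -/
noncomputable def periodDensity (z₁ z₂ z₃ α₁ α₂ α₃ : ℝ) (q : ℝ × ℝ) : ℝ :=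
  α₁ * α₂ * (z₂ - z₁) * (((z₂ - z₁) * (z₃ - z₁) * q.1) ^ (α₁ - 1) *
    ((z₃ - z₂) * (z₃ - z₁) * q.2) ^ α₃ * ((z₂ - z₁) * (z₃ - z₂) * (1 - q.1 - q.2)) ^ (α₂ - 1))

theorem threePointWeight_cross_eqOn (h₁₂ : z₁ < z₂) (h₂₃ : z₂ < z₃) :
    let U := threePointWeight z₁ z₂ z₃ α₁ α₂ α₃
    EqOn (fun p : ℝ × ℝ => α₁ * U p.1 / (p.1 - z₁) * (α₂ * U p.2 / (p.2 - z₂)) -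
        α₂ * U p.1 / (p.1 - z₂) * (α₁ * U p.2 / (p.2 - z₁)))
      (fun p => (p.2 - p.1) * periodDensity z₁ z₂ z₃ α₁ α₂ α₃ (rootsToSimplex z₁ z₂ z₃ p))
      (Ioo z₁ z₂ ×ˢ Ioo z₂ z₃) := by
  intro U p ⟨ht, hs⟩
  obtain ⟨hx, hy, hxy⟩ := rootsToSimplex_spec h₁₂.ne h₂₃.ne (h₁₂.trans h₂₃).ne p
  refine (threePointWeight_cross_eq ht hs).trans ?_
  simp only [periodDensity, hx, hy, hxy]
  ring

end ThreePointWeight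

/-- Determinant of the 2×2 hypergeometric period matrix for three points on a line. -/
theorem det_period_matrix_three_points (z₁ z₂ z₃ α₁ α₂ α₃ : ℝ)
    (h₁₂ : z₁ < z₂) (h₂₃ : z₂ < z₃)
    (hα₁ : 0 < α₁) (hα₂ : 0 < α₂) (hα₃ : 0 < α₃) :
    let U : ℝ → ℝ := fun t => |t - z₁| ^ α₁ * |t - z₂| ^ α₂ * |t - z₃| ^ α₃
    Matrix.det
      !![∫ t in z₁..z₂, α₁ * U t / (t - z₁), ∫ t in z₂..z₃, α₁ * U t / (t - z₁);
         ∫ t in z₁..z₂, α₂ * U t / (t - z₂), ∫ t in z₂..z₃, α₂ * U t / (t - z₂)] =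
      Real.Gamma (α₁ + 1) * Real.Gamma (α₂ + 1) * Real.Gamma (α₃ + 1) /
          Real.Gamma (α₁ + α₂ + α₃ + 1) *
        ((z₂ - z₁) ^ (α₁ + α₂) * (z₃ - z₁) ^ (α₁ + α₃) * (z₃ - z₂) ^ (α₂ + α₃)) := by
  intro U
  rw [show U = threePointWeight z₁ z₂ z₃ α₁ α₂ α₃ from rfl]
  have hA : 0 < z₂ - z₁ := sub_pos.2 h₁₂
  have hB : 0 < z₃ - z₂ := sub_pos.2 h₂₃
  have hC : 0 < z₃ - z₁ := by linarith
  have hD := integral_openSimplex_scaled_dirichlet hα₁ (by linarith : 0 < α₃ + 1) hα₂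
    (mul_pos hA hC).le (mul_pos hB hC).le (mul_pos hA hB).le
  rw [add_sub_cancel_right] at hD
  simp only [integral_of_le h₁₂.le, integral_of_le h₂₃.le, integral_Ioc_eq_integral_Ioo]
  rw [det_integrals_eq_setIntegral_prod
      (integrableOn_threePointWeight_div_sub_fst hα₁ hα₂.le hα₃.le _ _ _)
      (integrableOn_threePointWeight_div_sub_snd hα₁.le hα₂ hα₃.le _ _ _)
      (integrableOn_threePointWeight_div_sub_fst hα₁ hα₂.le hα₃.le _ _ _)
      (integrableOn_threePointWeight_div_sub_snd hα₁.le hα₂ hα₃.le _ _ _),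
    ← Measure.volume_eq_prod,
    setIntegral_congr_fun (measurableSet_Ioo.prod measurableSet_Ioo)
      (threePointWeight_cross_eqOn h₁₂ h₂₃),
    integral_rect_eq_integral_openSimplex h₁₂ h₂₃]
  simp only [periodDensity]
  rw [MeasureTheory.integral_const_mul, hD,
    Real.Gamma_add_one hα₁.ne', Real.Gamma_add_one hα₂.ne',
    show α₁ + (α₃ + 1) + α₂ = α₁ + α₂ + α₃ + 1 by ring]
  simp only [Real.mul_rpow hA.le hC.le, Real.mul_rpow hB.le hC.le, Real.mul_rpow hA.le hB.le,
    Real.rpow_sub_one hA.ne', Real.rpow_sub_one hB.ne', Real.rpow_sub_one hC.ne',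
    Real.rpow_add hA, Real.rpow_add hB, Real.rpow_add hC]
  field_simp
end

section
/- Let z₁ < z₂ be real numbers, α₁, α₂ > 0, and a > 0. Define U(t) = |t−z₁|^{α₁} |t−z₂|^{α₂} and, for the domains Δ₁ = [z₁,z₂], Δ₂ = [z₂,∞), set M_{ij} = ∫_{Δ_j} e^{−a t} α_i · U(t)/(t−z_i) dt (with 1/(t−z_i) the signed rational function). Then det(M) = Γ(α₁+1) Γ(α₂+1) e^{−a(z₁+z₂)} a^{−(α₁+α₂)} (z₂−z₁)^{α₁+α₂}. -/
/-!
Expanding the determinant by Fubini turns it into one integral over `Δ₁ × Δ₂` of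
`α₁ α₂ e^{-a(s+t)} U(s) U(t) (z₂ - z₁)(t - s) / ((s - z₁)(z₂ - s)(t - z₁)(t - z₂))`.
The substitution `x = (s - z₁)(t - z₁)`, `y = (z₂ - s)(t - z₂)` maps `Δ₁ × Δ₂` bijectively onto
`(0, ∞)²`, has Jacobian `(z₂ - z₁)(t - s)`, and satisfies `x + y = (z₂ - z₁)(s + t - z₁ - z₂)`.
It turns the integral into `α₁ α₂ e^{-a(z₁+z₂)} ∬ x^{α₁-1} y^{α₂-1} e^{-a(x+y)/(z₂-z₁)}`,
a product of two Gamma integrals.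
-/

open MeasureTheory intervalIntegral Real Set

theorem det_setIntegral_eq_setIntegral_prod {X : Type*} [MeasurableSpace X] {μ : Measure X}
    [SFinite μ] {f g : X → ℝ} {s t : Set X}
    (hfg : IntegrableOn (fun p : X × X => f p.1 * g p.2) (s ×ˢ t) (μ.prod μ))
    (hgf : IntegrableOn (fun p : X × X => g p.1 * f p.2) (s ×ˢ t) (μ.prod μ)) :
    !![∫ x in s, f x ∂μ, ∫ x in t, f x ∂μ; ∫ x in s, g x ∂μ, ∫ x in t, g x ∂μ].det =
      ∫ p in s ×ˢ t, (f p.1 * g p.2 - g p.1 * f p.2) ∂μ.prod μ := by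
  rw [Matrix.det_fin_two_of, integral_sub hfg hgf, setIntegral_prod_mul, setIntegral_prod_mul]
  ring

theorem IntegrableOn.of_sub_of_nonneg_of_nonpos {X : Type*} [MeasurableSpace X] {μ : Measure X}
    {P Q : X → ℝ} {s : Set X} (hs : MeasurableSet s) (h : IntegrableOn (fun x => P x - Q x) s μ)
    (hP : AEStronglyMeasurable P (μ.restrict s)) (hP₀ : ∀ x ∈ s, 0 ≤ P x)
    (hQ₀ : ∀ x ∈ s, Q x ≤ 0) : IntegrableOn P s μ ∧ IntegrableOn Q s μ := by
  have hPint : IntegrableOn P s μ := by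
    refine h.mono' hP ?_
    filter_upwards [ae_restrict_mem hs] with x hx
    rw [norm_of_nonneg (hP₀ x hx)]
    linarith [hQ₀ x hx]
  exact ⟨hPint, (hPint.sub h).congr_fun (fun x _ => by simp) hs⟩

noncomputable def gammaKernel (α₁ α₂ b : ℝ) (q : ℝ × ℝ) : ℝ :=
  q.1 ^ (α₁ - 1) * exp (-(b * q.1)) * (q.2 ^ (α₂ - 1) * exp (-(b * q.2)))

section GammaKernel

variable {α α₁ α₂ b : ℝ}

theorem integrableOn_rpow_mul_exp_neg_mul (hα : 0 < α) (hb : 0 < b) :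
    IntegrableOn (fun x => x ^ (α - 1) * exp (-(b * x))) (Ioi 0) :=
  Integrable.of_integral_ne_zero <| by
    rw [integral_rpow_mul_exp_neg_mul_Ioi hα hb]
    positivity

theorem integrableOn_gammaKernel (hα₁ : 0 < α₁) (hα₂ : 0 < α₂) (hb : 0 < b) :
    IntegrableOn (gammaKernel α₁ α₂ b) (Ioi 0 ×ˢ Ioi 0) := by
  rw [IntegrableOn, Measure.volume_eq_prod, ← Measure.prod_restrict]
  exact (integrableOn_rpow_mul_exp_neg_mul hα₁ hb).mul_prod
    (integrableOn_rpow_mul_exp_neg_mul hα₂ hb)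

theorem setIntegral_gammaKernel (hα₁ : 0 < α₁) (hα₂ : 0 < α₂) (hb : 0 < b) :
    ∫ q in Ioi 0 ×ˢ Ioi 0, gammaKernel α₁ α₂ b q =
      (1 / b) ^ α₁ * Gamma α₁ * ((1 / b) ^ α₂ * Gamma α₂) := by
  rw [← integral_rpow_mul_exp_neg_mul_Ioi hα₁ hb, ← integral_rpow_mul_exp_neg_mul_Ioi hα₂ hb,
    ← setIntegral_prod_mul]
  rfl

end GammaKernel

noncomputable def periodChart (z₁ z₂ : ℝ) (p : ℝ × ℝ) : ℝ × ℝ :=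
  ((p.1 - z₁) * (p.2 - z₁), (z₂ - p.1) * (p.2 - z₂))

noncomputable def fderivPeriodChart (z₁ z₂ : ℝ) (p : ℝ × ℝ) : ℝ × ℝ →L[ℝ] ℝ × ℝ :=
  (Matrix.toLin (.finTwoProd ℝ) (.finTwoProd ℝ)
    !![p.2 - z₁, p.1 - z₁; -(p.2 - z₂), z₂ - p.1]).toContinuousLinearMap

section PeriodChart

variable {z₁ z₂ : ℝ}

theorem hasFDerivAt_periodChart (p : ℝ × ℝ) :
    HasFDerivAt (periodChart z₁ z₂) (fderivPeriodChart z₁ z₂ p) p := by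
  unfold fderivPeriodChart
  rw [Matrix.toLin_finTwoProd_toContinuousLinearMap]
  have h₁ := (HasFDerivAt.sub_const z₁ (hasFDerivAt_fst (𝕜 := ℝ) (p := p))).mul
    (HasFDerivAt.sub_const z₁ (hasFDerivAt_snd (𝕜 := ℝ) (p := p)))
  have h₂ := ((hasFDerivAt_fst (𝕜 := ℝ) (p := p)).const_sub z₂).mul
    (HasFDerivAt.sub_const z₂ (hasFDerivAt_snd (𝕜 := ℝ) (p := p)))
  convert h₁.prodMk h₂ using 2 <;> ext <;> simp [periodChart]

theorem det_fderivPeriodChart (p : ℝ × ℝ) :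
    (fderivPeriodChart z₁ z₂ p).det = (z₂ - z₁) * (p.2 - p.1) := by
  simp only [fderivPeriodChart, LinearMap.det_toContinuousLinearMap, LinearMap.det_toLin,
    Matrix.det_fin_two_of]
  ring

theorem abs_det_fderivPeriodChart {p : ℝ × ℝ} (hp : p ∈ Ioo z₁ z₂ ×ˢ Ioi z₂) :
    |(fderivPeriodChart z₁ z₂ p).det| = (z₂ - z₁) * (p.2 - p.1) := by
  obtain ⟨⟨hs₁, hs₂⟩, ht⟩ := hp
  rw [det_fderivPeriodChart, abs_of_pos (mul_pos (by linarith) (by linarith [mem_Ioi.1 ht]))]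

theorem injOn_periodChart : InjOn (periodChart z₁ z₂) (Ioo z₁ z₂ ×ˢ Ioi z₂) := by
  rintro ⟨s, t⟩ ⟨hs, ht⟩ ⟨s', t'⟩ ⟨hs', ht'⟩ h
  simp only [periodChart, Prod.mk.injEq, mem_Ioo, mem_Ioi] at h hs ht hs' ht' ⊢
  obtain ⟨h₁, h₂⟩ := h
  have hsum : s + t = s' + t' := by
    have : (z₂ - z₁) * (s + t - (s' + t')) = 0 := by linear_combination h₁ + h₂
    linarith [(mul_eq_zero.1 this).resolve_left (by linarith)]
  -- `s'` is a root of `(X - s)(X - t)`, and `s' < z₂ < t`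
  have : (s' - s) * (s' - t) = 0 := by linear_combination h₁ + (z₁ - s') * hsum
  have hss' : s' = s := by
    rcases mul_eq_zero.1 this with h | h <;> linarith
  exact ⟨hss'.symm, by linarith⟩

theorem image_periodChart (h : z₁ < z₂) :
    periodChart z₁ z₂ '' (Ioo z₁ z₂ ×ˢ Ioi z₂) = Ioi 0 ×ˢ Ioi 0 := by
  apply Subset.antisymm
  · rintro _ ⟨⟨s, t⟩, ⟨⟨hs₁, hs₂⟩, ht⟩, rfl⟩
    simp only [mem_Ioi] at ht
    simp only [periodChart, mem_prod, mem_Ioi]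
    exact ⟨mul_pos (by linarith) (by linarith), mul_pos (by linarith) (by linarith)⟩
  · rintro ⟨x, y⟩ ⟨hx, hy⟩
    simp only [mem_Ioi] at hx hy
    have hc : 0 < z₂ - z₁ := sub_pos.2 h
    -- `S = s - z₁` is the root in `(0, c)` of `c S² - (x + y + c²) S + c x`,
    -- which takes the values `c x > 0` at `0` and `-c y < 0` at `c = z₂ - z₁`
    obtain ⟨S, ⟨hS₀, hSc⟩, hS⟩ : ∃ S ∈ Ioo 0 (z₂ - z₁),
        (z₂ - z₁) * S ^ 2 - (x + y + (z₂ - z₁) ^ 2) * S + (z₂ - z₁) * x = 0 := by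
      refine intermediate_value_Ioo' hc.le (by fun_prop) ⟨?_, ?_⟩ <;> nlinarith
    have hT : (z₂ - z₁ - S) * (x / S - (z₂ - z₁)) = y := by
      field_simp
      linear_combination hS
    refine ⟨(z₁ + S, z₁ + x / S), ⟨⟨by linarith, by linarith⟩, ?_⟩, ?_⟩
    · have := pos_of_mul_pos_right (hT ▸ hy) (by linarith)
      simp only [mem_Ioi]
      linarith
    · simp only [periodChart, Prod.mk.injEq]
      constructor
      · field_simp; ring
      · rw [← hT]; ring

theorem integrableOn_comp_periodChart_iff (h : z₁ < z₂) {g : ℝ × ℝ → ℝ} :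
    IntegrableOn (fun p => (z₂ - z₁) * (p.2 - p.1) * g (periodChart z₁ z₂ p))
      (Ioo z₁ z₂ ×ˢ Ioi z₂) ↔ IntegrableOn g (Ioi 0 ×ˢ Ioi 0) := by
  rw [← image_periodChart h, integrableOn_image_iff_integrableOn_abs_det_fderiv_smul volume
    (measurableSet_Ioo.prod measurableSet_Ioi)
    (fun p _ => (hasFDerivAt_periodChart p).hasFDerivWithinAt) injOn_periodChart]
  exact integrableOn_congr_fun (fun p hp => by rw [abs_det_fderivPeriodChart hp, smul_eq_mul])
    (measurableSet_Ioo.prod measurableSet_Ioi)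

theorem setIntegral_comp_periodChart (h : z₁ < z₂) (g : ℝ × ℝ → ℝ) :
    ∫ p in Ioo z₁ z₂ ×ˢ Ioi z₂, (z₂ - z₁) * (p.2 - p.1) * g (periodChart z₁ z₂ p) =
      ∫ q in Ioi 0 ×ˢ Ioi 0, g q := by
  rw [← image_periodChart h, integral_image_eq_integral_abs_det_fderiv_smul volume
    (measurableSet_Ioo.prod measurableSet_Ioi)
    (fun p _ => (hasFDerivAt_periodChart p).hasFDerivWithinAt) injOn_periodChart]
  exact setIntegral_congr_fun (measurableSet_Ioo.prod measurableSet_Ioi)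
    (fun p hp => by rw [abs_det_fderivPeriodChart hp, smul_eq_mul])

end PeriodChart

noncomputable def periodIntegrand (z₁ z₂ α₁ α₂ a α z t : ℝ) : ℝ :=
  exp (-a * t) * (α * (|t - z₁| ^ α₁ * |t - z₂| ^ α₂) / (t - z))

section PeriodIntegrand

variable {z₁ z₂ α₁ α₂ a α z t : ℝ}

@[fun_prop]
theorem measurable_periodIntegrand : Measurable (periodIntegrand z₁ z₂ α₁ α₂ a α z) := by
  unfold periodIntegrand
  fun_prop

theorem periodIntegrand_nonneg (hα : 0 ≤ α) (h : z ≤ t) :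
    0 ≤ periodIntegrand z₁ z₂ α₁ α₂ a α z t :=
  mul_nonneg (exp_pos _).le (div_nonneg (by positivity) (sub_nonneg.2 h))

theorem periodIntegrand_nonpos (hα : 0 ≤ α) (h : t ≤ z) :
    periodIntegrand z₁ z₂ α₁ α₂ a α z t ≤ 0 :=
  mul_nonpos_of_nonneg_of_nonpos (exp_pos _).le
    (div_nonpos_of_nonneg_of_nonpos (by positivity) (sub_nonpos.2 h))

theorem periodIntegrand_mul_sub {p : ℝ × ℝ} (hp : p ∈ Ioo z₁ z₂ ×ˢ Ioi z₂) :
    periodIntegrand z₁ z₂ α₁ α₂ a α₁ z₁ p.1 * periodIntegrand z₁ z₂ α₁ α₂ a α₂ z₂ p.2 -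
        periodIntegrand z₁ z₂ α₁ α₂ a α₂ z₂ p.1 * periodIntegrand z₁ z₂ α₁ α₂ a α₁ z₁ p.2 =
      (z₂ - z₁) * (p.2 - p.1) * (α₁ * α₂ * exp (-a * (z₁ + z₂)) *
        gammaKernel α₁ α₂ (a / (z₂ - z₁)) (periodChart z₁ z₂ p)) := by
  obtain ⟨s, t⟩ := p
  obtain ⟨⟨hs₁, hs₂⟩, ht⟩ := hp
  simp only [mem_Ioi] at ht
  have hA : 0 < s - z₁ := by linarith
  have hB : 0 < z₂ - s := by linarith
  have hB' : s - z₂ < 0 := by linarith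
  have hC : 0 < t - z₁ := by linarith
  have hD : 0 < t - z₂ := by linarith
  have hc : 0 < z₂ - z₁ := by linarith
  have hexp : exp (-a * (z₁ + z₂)) = exp (-a * s) * exp (-a * t) /
      (exp (-(a / (z₂ - z₁) * ((s - z₁) * (t - z₁)))) *
        exp (-(a / (z₂ - z₁) * ((z₂ - s) * (t - z₂))))) := by
    rw [eq_div_iff (by positivity), ← exp_add, ← exp_add, ← exp_add]
    congr 1
    field_simp
    ring
  simp only [periodIntegrand, gammaKernel, periodChart]
  rw [abs_of_pos hA, abs_of_neg hB', abs_of_pos hC, abs_of_pos hD,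
    neg_sub, rpow_sub_one (by positivity), rpow_sub_one (by positivity),
    mul_rpow hA.le hC.le, mul_rpow hB.le hD.le, hexp]
  field_simp [hB'.ne]
  ring

end PeriodIntegrand

/-- Determinant of the 2×2 hypergeometric period matrix with exponential weight
for two points on a line, with domains `[z₁,z₂]` and `[z₂,∞)`. -/
theorem det_period_matrix_two_points_exp (z₁ z₂ α₁ α₂ a : ℝ)
    (h₁₂ : z₁ < z₂) (hα₁ : 0 < α₁) (hα₂ : 0 < α₂) (ha : 0 < a) :
    let U : ℝ → ℝ := fun t => |t - z₁| ^ α₁ * |t - z₂| ^ α₂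
    Matrix.det
      !![∫ t in z₁..z₂, Real.exp (-a * t) * (α₁ * U t / (t - z₁)),
           ∫ t in Set.Ioi z₂, Real.exp (-a * t) * (α₁ * U t / (t - z₁));
         ∫ t in z₁..z₂, Real.exp (-a * t) * (α₂ * U t / (t - z₂)),
           ∫ t in Set.Ioi z₂, Real.exp (-a * t) * (α₂ * U t / (t - z₂))] =
      Real.Gamma (α₁ + 1) * Real.Gamma (α₂ + 1) * Real.exp (-a * (z₁ + z₂)) *
        a ^ (-(α₁ + α₂)) * (z₂ - z₁) ^ (α₁ + α₂) := by
  intro U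
  set f := periodIntegrand z₁ z₂ α₁ α₂ a
  set g := fun q => α₁ * α₂ * exp (-a * (z₁ + z₂)) * gammaKernel α₁ α₂ (a / (z₂ - z₁)) q
  have hc : 0 < z₂ - z₁ := sub_pos.2 h₁₂
  have hR : MeasurableSet (Ioo z₁ z₂ ×ˢ Ioi z₂) := measurableSet_Ioo.prod measurableSet_Ioi
  have hdiff : IntegrableOn (fun p => f α₁ z₁ p.1 * f α₂ z₂ p.2 - f α₂ z₂ p.1 * f α₁ z₁ p.2)
      (Ioo z₁ z₂ ×ˢ Ioi z₂) :=
    (integrableOn_congr_fun (fun p hp => periodIntegrand_mul_sub hp) hR).2 <|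
      (integrableOn_comp_periodChart_iff h₁₂ (g := g)).2
        ((integrableOn_gammaKernel hα₁ hα₂ (div_pos ha hc)).const_mul _)
  obtain ⟨hP, hQ⟩ := IntegrableOn.of_sub_of_nonneg_of_nonpos hR hdiff
    (by fun_prop : Measurable _).aestronglyMeasurable
    (fun p hp => mul_nonneg (periodIntegrand_nonneg hα₁.le hp.1.1.le)
      (periodIntegrand_nonneg hα₂.le hp.2.le))
    (fun p hp => mul_nonpos_of_nonpos_of_nonneg (periodIntegrand_nonpos hα₂.le hp.1.2.le)
      (periodIntegrand_nonneg hα₁.le (h₁₂.trans hp.2).le))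
  change Matrix.det !![∫ t in z₁..z₂, f α₁ z₁ t, ∫ t in Ioi z₂, f α₁ z₁ t;
    ∫ t in z₁..z₂, f α₂ z₂ t, ∫ t in Ioi z₂, f α₂ z₂ t] = _
  rw [integral_of_le h₁₂.le, integral_of_le h₁₂.le, integral_Ioc_eq_integral_Ioo,
    integral_Ioc_eq_integral_Ioo, det_setIntegral_eq_setIntegral_prod hP hQ,
    ← Measure.volume_eq_prod, setIntegral_congr_fun hR (fun p hp => periodIntegrand_mul_sub hp),
    setIntegral_comp_periodChart h₁₂ g, MeasureTheory.integral_const_mul,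
    setIntegral_gammaKernel hα₁ hα₂ (div_pos ha hc), Gamma_add_one hα₁.ne', Gamma_add_one hα₂.ne',
    one_div_div, div_rpow hc.le ha.le, div_rpow hc.le ha.le, rpow_neg ha.le, rpow_add hc,
    rpow_add ha]
  field_simp
end

section
/- For every real number A, the ratio of Gamma functions satisfies lim_{t → +∞} t^A · Γ(t+1)/Γ(t+1+A) = 1. -/
open Filter Topology

/-!
Log-convexity of `Γ` on `(0, ∞)` gives `(x + s - 1) ^ s Γ(x) ≤ Γ(x + s) ≤ x ^ s Γ(x)` for
`0 ≤ s ≤ 1`, which squeezes the ratio to `1` when `A ∈ [0, 1]`. The functional equation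
`Γ(x + 1) = x Γ(x)` changes the ratio for `A + 1` from the one for `A` by a factor
`t / (t + 1 + A) → 1`, so the statement is `1`-periodic in `A`.
-/

lemma tendsto_div_add_const_atTop (c : ℝ) :
    Tendsto (fun t : ℝ => t / (t + c)) atTop (𝓝 1) := by
  have h : Tendsto (fun t : ℝ => (1 + c / t)⁻¹) atTop (𝓝 1) := by
    simpa using (tendsto_const_nhds.add (tendsto_const_nhds.div_atTop tendsto_id)).inv₀
      (by norm_num : (1 + 0 : ℝ) ≠ 0)
  refine h.congr' ?_
  filter_upwards [eventually_ne_atTop 0] with t ht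
  rw [one_add_div ht, inv_div, add_comm]

namespace Real

lemma Gamma_add_le_Gamma_mul_rpow {x s : ℝ} (hx : 0 < x) (hs₀ : 0 ≤ s) (hs₁ : s ≤ 1) :
    Gamma (x + s) ≤ Gamma x * x ^ s := by
  rcases hs₀.eq_or_lt with rfl | hs_pos
  · simp
  rcases hs₁.eq_or_lt with rfl | hs_lt
  · rw [Gamma_add_one hx.ne', rpow_one, mul_comm]
  have hΓ := Gamma_pos_of_pos hx
  calc Gamma (x + s) = Gamma ((1 - s) * x + s * (x + 1)) := by ring_nf
    _ ≤ Gamma x ^ (1 - s) * Gamma (x + 1) ^ s :=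
      Gamma_mul_add_mul_le_rpow_Gamma_mul_rpow_Gamma hx (by linarith) (by linarith) hs_pos (by ring)
    _ = Gamma x * x ^ s := by
      rw [Gamma_add_one hx.ne', mul_rpow hx.le hΓ.le, mul_left_comm, ← rpow_add hΓ,
        sub_add_cancel, rpow_one, mul_comm]

lemma rpow_mul_Gamma_add_one_le_Gamma_add {x s : ℝ} (hx : 0 < x + s) (hs₀ : 0 ≤ s)
    (hs₁ : s ≤ 1) : (x + s) ^ s * Gamma (x + 1) ≤ Gamma (x + s + 1) := by
  have h := Gamma_add_le_Gamma_mul_rpow hx (by linarith : 0 ≤ 1 - s) (by linarith)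
  rw [add_add_sub_cancel] at h
  calc (x + s) ^ s * Gamma (x + 1) ≤ (x + s) ^ s * (Gamma (x + s) * (x + s) ^ (1 - s)) := by
        gcongr
    _ = Gamma (x + s + 1) := by
      rw [Gamma_add_one hx.ne', mul_left_comm, ← rpow_add hx, add_sub_cancel, rpow_one,
        mul_comm]

noncomputable def gammaRatio (A t : ℝ) : ℝ :=
  t ^ A * Gamma (t + 1) / Gamma (t + 1 + A)

lemma rpow_div_add_one_le_gammaRatio {s t : ℝ} (ht : 0 < t) (hs₀ : 0 ≤ s) (hs₁ : s ≤ 1) :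
    (t / (t + 1)) ^ s ≤ gammaRatio s t := by
  have ht₁ : 0 < t + 1 := by linarith
  have h := Gamma_add_le_Gamma_mul_rpow ht₁ hs₀ hs₁
  rw [gammaRatio, le_div_iff₀ (Gamma_pos_of_pos (by linarith)), div_rpow ht.le ht₁.le]
  calc t ^ s / (t + 1) ^ s * Gamma (t + 1 + s)
      ≤ t ^ s / (t + 1) ^ s * (Gamma (t + 1) * (t + 1) ^ s) := by gcongr
    _ = t ^ s * Gamma (t + 1) := by field_simp

lemma gammaRatio_le_rpow_div_add {s t : ℝ} (ht : 0 < t) (hs₀ : 0 ≤ s) (hs₁ : s ≤ 1) :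
    gammaRatio s t ≤ (t / (t + s)) ^ s := by
  have hts : 0 < t + s := by linarith
  have h := rpow_mul_Gamma_add_one_le_Gamma_add hts hs₀ hs₁
  rw [add_right_comm] at h
  rw [gammaRatio, div_le_iff₀ (Gamma_pos_of_pos (by linarith)), div_rpow ht.le hts.le]
  calc t ^ s * Gamma (t + 1) = t ^ s / (t + s) ^ s * ((t + s) ^ s * Gamma (t + 1)) := by
        field_simp
    _ ≤ t ^ s / (t + s) ^ s * Gamma (t + 1 + s) := by gcongr

lemma tendsto_gammaRatio_of_mem_Icc {s : ℝ} (hs₀ : 0 ≤ s) (hs₁ : s ≤ 1) :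
    Tendsto (gammaRatio s) atTop (𝓝 1) := by
  have h (c : ℝ) : Tendsto (fun t : ℝ => (t / (t + c)) ^ s) atTop (𝓝 1) := by
    simpa using (tendsto_div_add_const_atTop c).rpow_const (Or.inl one_ne_zero)
  refine tendsto_of_tendsto_of_tendsto_of_le_of_le' (h 1) (h s) ?_ ?_
  · filter_upwards [eventually_gt_atTop 0] with t ht
    exact rpow_div_add_one_le_gammaRatio ht hs₀ hs₁
  · filter_upwards [eventually_gt_atTop 0] with t ht
    exact gammaRatio_le_rpow_div_add ht hs₀ hs₁

lemma gammaRatio_add_one {A t : ℝ} (ht : 0 < t) (hA : 0 < t + 1 + A) :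
    gammaRatio (A + 1) t = gammaRatio A t * (t / (t + 1 + A)) := by
  have hΓ := (Gamma_pos_of_pos hA).ne'
  rw [gammaRatio, gammaRatio, ← add_assoc, Gamma_add_one hA.ne', rpow_add_one ht.ne']
  field_simp

lemma periodic_tendsto_gammaRatio :
    Function.Periodic (fun A => Tendsto (gammaRatio A) atTop (𝓝 1)) 1 := by
  intro A
  have hev : gammaRatio (A + 1) =ᶠ[atTop] fun t => gammaRatio A t * (t / (t + (1 + A))) := by
    filter_upwards [eventually_gt_atTop (max 0 (-(1 + A)))] with t ht
    rw [max_lt_iff] at ht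
    rw [gammaRatio_add_one ht.1 (by linarith), add_assoc]
  have hlim := tendsto_div_add_const_atTop (1 + A)
  refine propext ⟨fun h => ?_, fun h => (tendsto_congr' hev).2 (by simpa using h.mul hlim)⟩
  have hne : ∀ᶠ t in atTop, t / (t + (1 + A)) ≠ 0 := hlim.eventually_ne one_ne_zero
  have h' : Tendsto (fun t => gammaRatio A t * (t / (t + (1 + A))) * (t / (t + (1 + A)))⁻¹)
      atTop (𝓝 1) := by
    simpa using ((tendsto_congr' hev).1 h).mul (hlim.inv₀ one_ne_zero)
  refine h'.congr' ?_
  filter_upwards [hne] with t ht using mul_inv_cancel_right₀ ht _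

end Real

/-- `t^A Γ(t+1)/Γ(t+1+A) → 1` as `t → +∞`. -/
theorem tendsto_rpow_mul_Gamma_div_Gamma (A : ℝ) :
    Tendsto (fun t : ℝ => t ^ A * Real.Gamma (t + 1) / Real.Gamma (t + 1 + A))
      atTop (nhds 1) := by
  have h := Real.tendsto_gammaRatio_of_mem_Icc (Int.fract_nonneg A) (Int.fract_lt_one A).le
  rwa [Int.fract, ← mul_one (⌊A⌋ : ℝ), Real.periodic_tendsto_gammaRatio.sub_int_mul_eq] at h
end

section
/- Let H₁, …, H_p be affine hyperplanes in ℝⁿ in general position, meaning: for every subset J ⊆ {1,…,p} with 1 ≤ |J| ≤ n, the intersection ⋂_{i∈J} H_i is an affine subspace of codimension |J|, and for every J with |J| > n the intersection ⋂_{i∈J} H_i is empty. Then the number of bounded connected components of ℝⁿ ∖ (H₁ ∪ ⋯ ∪ H_p) equals the binomial coefficient C(p−1, n). -/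
/-!
The complement of the hyperplanes is the disjoint union of the open convex cells cut out by sign
vectors, and these cells are its connected components. Bounded cells are counted by
deletion–restriction. Remove the last hyperplane `H = {g = 0}`; a cell `C` of the remaining
arrangement contains no line (its `p - 1 ≥ n` normals span), and either misses `H` or is cut
into `C⁺ = C ∩ {g > 0}` and `C⁻ = C ∩ {g < 0}`. Each of `C`, `C⁺`, `C⁻`, `C ∩ H` is bounded iff
the recession cone `R` of `C` meets `univ`, `{g.linear ≥ 0}`, `{g.linear ≤ 0}`, `ker g.linear`
only in `0`, and since `R` is a line-free convex cone this gives `[C⁺] + [C⁻] = [C] + [C ∩ H]`,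
where `[S]` is `1` if `S` is nonempty and bounded, `0` otherwise. Summing over cells yields
Pascal's rule `b(p, n) = b(p - 1, n) + b(p - 1, n - 1)`, the last term counting the bounded
cells of the arrangement induced on `H`, again in general position. Together with `b(p, 0) = 1` and
`b(p, n) = 0` for `p ≤ n`, `n ≥ 1` (some direction moves every `f i` away from `0`), this gives
`C(p - 1, n)`.
-/

open Set Bornology Filter Topology

section RecessionCone

variable {E : Type*}

section Module

variable [AddCommGroup E] [Module ℝ E]

def recessionCone (S : Set E) : Set E := {v | ∀ x ∈ S, ∀ t : ℝ, 0 ≤ t → x + t • v ∈ S}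

variable {S : Set E} {v w : E}

lemma smul_mem_recessionCone (hv : v ∈ recessionCone S) {c : ℝ} (hc : 0 ≤ c) :
    c • v ∈ recessionCone S := fun x hx t ht => by
  simpa [smul_smul] using hv x hx (t * c) (mul_nonneg ht hc)

lemma add_mem_recessionCone (hv : v ∈ recessionCone S) (hw : w ∈ recessionCone S) :
    v + w ∈ recessionCone S := fun x hx t ht => by
  simpa [smul_add, add_assoc] using hw _ (hv x hx t ht) t ht

lemma recessionCone_inter_subset (S T : Set E) :
    recessionCone S ∩ recessionCone T ⊆ recessionCone (S ∩ T) :=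
  fun _ hv x hx t ht => ⟨hv.1 x hx.1 t ht, hv.2 x hx.2 t ht⟩

lemma iInter_recessionCone_subset {ι : Sort*} (S : ι → Set E) :
    ⋂ i, recessionCone (S i) ⊆ recessionCone (⋂ i, S i) := fun _ hv x hx t ht =>
  mem_iInter.2 fun i => mem_iInter.1 hv i x (mem_iInter.1 hx i) t ht

lemma mem_recessionCone_of_neg_mem {x : E} (hx : x ∈ S) (hv : v ∈ recessionCone S)
    (hv' : -v ∈ recessionCone S) (t : ℝ) : x + t • v ∈ S := by
  rcases le_total 0 t with ht | ht
  · exact hv x hx t ht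
  · simpa using hv' x hx (-t) (neg_nonneg.2 ht)

lemma recessionCone_univ : recessionCone (univ : Set E) = univ :=
  eq_univ_of_forall fun _ _ _ _ _ => mem_univ _

lemma recessionCone_singleton (x : E) : recessionCone {x} = {0} := by
  refine subset_antisymm (fun v hv => ?_) fun v hv t ht => ?_
  · simpa using hv x rfl 1 zero_le_one
  · simp_all

/-- Vectors `v`, `w` on opposite sides of `ker a` give `a v • w - a w • v ∈ ker a`, hence a line. -/
theorem forall_nonneg_eq_zero_or_forall_nonpos_eq_zero
    (hS : ∀ v ∈ recessionCone S, -v ∈ recessionCone S → v = 0) (a : E →ₗ[ℝ] ℝ)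
    (ha : ∀ v ∈ recessionCone S, a v = 0 → v = 0) :
    (∀ v ∈ recessionCone S, 0 ≤ a v → v = 0) ∨ (∀ v ∈ recessionCone S, a v ≤ 0 → v = 0) := by
  by_contra! h
  obtain ⟨⟨v, hv, hav, hv0⟩, ⟨w, hw, haw, hw0⟩⟩ := h
  have hav : 0 < a v := hav.lt_of_ne fun h => hv0 (ha v hv h.symm)
  have haw : a w < 0 := haw.lt_of_ne fun h => hw0 (ha w hw h)
  have hu : a v • w + (-a w) • v = 0 :=
    ha _ (add_mem_recessionCone (smul_mem_recessionCone hw hav.le)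
      (smul_mem_recessionCone hv (by linarith)))
      (by simp only [map_add, map_smul, smul_eq_mul]; ring)
  have hneg : -v = (a v / -a w) • w := by
    rw [div_eq_inv_mul, mul_smul, eq_inv_smul_iff₀ (by linarith)]
    linear_combination (norm := module) -hu
  exact hv0 (hS v hv (hneg ▸ smul_mem_recessionCone hw (div_nonneg hav.le (by linarith))))

end Module

lemma Real.recessionCone_Ioi (a : ℝ) : recessionCone (Ioi a) = Ici 0 := by
  refine subset_antisymm (fun c hc => ?_) fun c hc x hx t ht => ?_
  · rw [mem_Ici]
    by_contra! h
    have := hc (a + 1) (by simp) (-c⁻¹) (by simp [h.le])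
    simp [inv_mul_cancel₀ h.ne] at this
  · simp only [mem_Ioi, smul_eq_mul] at hx ⊢
    nlinarith [mem_Ici.1 hc]

lemma Real.recessionCone_Iio (a : ℝ) : recessionCone (Iio a) = Iic 0 := by
  refine subset_antisymm (fun c hc => ?_) fun c hc x hx t ht => ?_
  · rw [mem_Iic]
    by_contra! h
    have := hc (a - 1) (by simp) c⁻¹ (by simp [h.le])
    simp [inv_mul_cancel₀ h.ne'] at this
  · simp only [mem_Iio, smul_eq_mul] at hx ⊢
    nlinarith [mem_Iic.1 hc]

section Affine

variable [AddCommGroup E] [Module ℝ E] {F : Type*} [AddCommGroup F] [Module ℝ F]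

lemma AffineMap.apply_add_smul (g : E →ᵃ[ℝ] F) (x v : E) (t : ℝ) :
    g (x + t • v) = g x + t • g.linear v := by
  rw [add_comm x, ← vadd_eq_add, g.map_vadd, map_smul, vadd_eq_add, add_comm]

lemma preimage_recessionCone_subset (g : E →ᵃ[ℝ] F) (T : Set F) :
    g.linear ⁻¹' recessionCone T ⊆ recessionCone (g ⁻¹' T) := fun v hv x hx t ht => by
  simpa [mem_preimage, g.apply_add_smul] using hv (g x) hx t ht

lemma recessionCone_preimage {g : E →ᵃ[ℝ] F} (hg : Function.Surjective g) (T : Set F) :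
    recessionCone (g ⁻¹' T) = g.linear ⁻¹' recessionCone T := by
  refine subset_antisymm (fun v hv y hy t ht => ?_) (preimage_recessionCone_subset g T)
  obtain ⟨x, rfl⟩ := hg y
  simpa [g.apply_add_smul] using hv x hy t ht

end Affine

section Normed

variable [NormedAddCommGroup E] [NormedSpace ℝ E] {S C D : Set E} {x v : E}

lemma not_isBounded_of_mem_recessionCone (hx : x ∈ S) (hv : v ≠ 0)
    (hvS : v ∈ recessionCone S) : ¬IsBounded S := by
  rw [Metric.isBounded_iff_subset_closedBall x]
  rintro ⟨r, hr⟩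
  have hvn : 0 < ‖v‖ := norm_pos_iff.2 hv
  have hr0 : 0 ≤ r := Metric.nonempty_closedBall.1 ⟨x, hr hx⟩
  have := hr (hvS x hx ((r + 1) / ‖v‖) (by positivity))
  rw [Metric.mem_closedBall, dist_eq_norm, add_sub_cancel_left, norm_smul, Real.norm_eq_abs,
    abs_of_nonneg (by positivity), div_mul_cancel₀ _ hvn.ne'] at this
  linarith

lemma IsClosed.mem_recessionCone (hS : IsClosed S) (hSc : Convex ℝ S)
    (hray : ∀ t : ℝ, 0 ≤ t → x + t • v ∈ S) : v ∈ recessionCone S := by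
  intro z hz t ht
  have hlim : Tendsto (fun s : ℝ => z + t • v + (t / s) • (x - z)) atTop (𝓝 (z + t • v)) := by
    simpa using ((tendsto_const_nhds (x := t)).div_atTop tendsto_id).smul_const (x - z)
      |>.const_add (z + t • v)
  refine hS.mem_of_tendsto hlim ?_
  filter_upwards [eventually_ge_atTop (t + 1)] with s hs
  have hs0 : 0 < s := by linarith
  have hts : t / s ≤ 1 := (div_le_one hs0).2 (by linarith)
  convert hSc hz (hray s hs0.le) (sub_nonneg.2 hts) (div_nonneg ht hs0.le) (by ring) using 1
  rw [smul_add, smul_smul, div_mul_cancel₀ t hs0.ne']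
  module

lemma IsOpen.recessionCone_closure_subset (hC : Convex ℝ C) (hCo : IsOpen C) :
    recessionCone (closure C) ⊆ recessionCone C := fun v hv y hy t ht => by
  have h := hC.combo_interior_closure_mem_interior (hCo.interior_eq.symm ▸ hy)
    (hv y (subset_closure hy) (2 * t) (by positivity)) (by norm_num : (0 : ℝ) < 1 / 2)
    (by norm_num : (0 : ℝ) ≤ 1 / 2) (by norm_num)
  rw [hCo.interior_eq] at h
  convert h using 1
  rw [smul_add, smul_smul]
  module

/-- Normalise far away points to the unit sphere and extract a convergent subsequence. -/
lemma exists_ray_of_not_isBounded [FiniteDimensional ℝ E] (hS : Convex ℝ S) (hx : x ∈ S)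
    (hb : ¬IsBounded S) : ∃ v ≠ 0, ∀ t : ℝ, 0 ≤ t → x + t • v ∈ closure S := by
  have hfar : ∀ k : ℕ, ∃ y ∈ S, (k : ℝ) + 1 < ‖y - x‖ := fun k => by
    by_contra! h
    exact hb ((Metric.isBounded_iff_subset_closedBall x).2
      ⟨k + 1, fun y hy => by simpa [dist_eq_norm] using h y hy⟩)
  choose y hyS hy using hfar
  have hd : ∀ k, 0 < ‖y k - x‖ := fun k => by linarith [hy k]
  set u : ℕ → E := fun k => ‖y k - x‖⁻¹ • (y k - x)
  have hu : ∀ k, u k ∈ Metric.sphere (0 : E) 1 := fun k => by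
    simp [u, norm_smul, (hd k).ne']
  obtain ⟨v, hv, φ, hφ, hlim⟩ := (isCompact_sphere (0 : E) 1).tendsto_subseq hu
  refine ⟨v, ne_zero_of_mem_unit_sphere ⟨v, hv⟩, fun t ht => mem_closure_of_tendsto
    (tendsto_const_nhds.add (hlim.const_smul t)) ?_⟩
  filter_upwards [eventually_ge_atTop ⌈t⌉₊] with k hk
  have htd : t ≤ ‖y (φ k) - x‖ := by
    have : (k : ℝ) ≤ φ k := by exact_mod_cast hφ.le_apply
    linarith [Nat.le_ceil t, (Nat.cast_le (α := ℝ)).2 hk, hy (φ k)]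
  set d := ‖y (φ k) - x‖
  have hmem := hS hx (hyS (φ k)) (sub_nonneg.2 ((div_le_one (hd _)).2 htd))
    (div_nonneg ht (hd _).le) (sub_add_cancel 1 (t / d))
  convert hmem using 1
  simp only [Function.comp_apply, u, smul_smul, div_eq_mul_inv]
  module

theorem isBounded_inter_iff [FiniteDimensional ℝ E] (hC : Convex ℝ C) (hCo : IsOpen C)
    (hD : Convex ℝ D) (hDo : IsOpen D ∨ IsClosed D) (hx : x ∈ C ∩ D) :
    IsBounded (C ∩ D) ↔ ∀ v ∈ recessionCone C, v ∈ recessionCone D → v = 0 := by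
  refine ⟨fun hb v hvC hvD => by_contra fun hv => not_isBounded_of_mem_recessionCone hx hv
    (recessionCone_inter_subset C D ⟨hvC, hvD⟩) hb, fun h => by_contra fun hb => ?_⟩
  obtain ⟨v, hv, hray⟩ := exists_ray_of_not_isBounded (hC.inter hD) hx hb
  have hrec : ∀ T, Convex ℝ T → (IsOpen T ∨ IsClosed T) → C ∩ D ⊆ T → v ∈ recessionCone T := by
    intro T hT hTo hsub
    have hvT := isClosed_closure.mem_recessionCone hT.closure fun t ht =>
      closure_mono hsub (hray t ht)
    rcases hTo with hTo | hTc
    · exact hTo.recessionCone_closure_subset hT hvT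
    · rwa [hTc.closure_eq] at hvT
  exact hv (h v (hrec C hC (Or.inl hCo) inter_subset_left) (hrec D hD hDo inter_subset_right))

end Normed

end RecessionCone

open Classical in
noncomputable def boundedCount {α : Type*} [Bornology α] (S : Set α) : ℕ :=
  if S.Nonempty ∧ IsBounded S then 1 else 0

lemma Isometry.boundedCount_image {α β : Type*} [PseudoMetricSpace α] [PseudoMetricSpace β]
    {e : α → β} (he : Isometry e) (T : Set α) : boundedCount (e '' T) = boundedCount T := by
  classical
  have hb : IsBounded (e '' T) ↔ IsBounded T :=
    ⟨fun h => (he.antilipschitz.isBounded_preimage h).subset (subset_preimage_image e T),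
      he.lipschitz.isBounded_image⟩
  simp only [boundedCount, image_nonempty, hb]

section HyperplaneCut

variable {E : Type*} [NormedAddCommGroup E] [NormedSpace ℝ E] {C : Set E}

lemma exists_mem_lt_of_isOpen (hC : IsOpen C) {x : E} (hx : x ∈ C) {g : E →ᵃ[ℝ] ℝ}
    (hg : g.linear ≠ 0) : ∃ y ∈ C, g x < g y := by
  obtain ⟨v, hv⟩ := LinearMap.surjective hg 1
  have hline : ∀ᶠ t in 𝓝 (0 : ℝ), x + t • v ∈ C :=
    (by fun_prop : Continuous fun t : ℝ => x + t • v).continuousAt.preimage_mem_nhds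
      (by simpa using hC.mem_nhds hx)
  obtain ⟨t, hxt, ht⟩ := ((hline.filter_mono nhdsWithin_le_nhds).and self_mem_nhdsWithin :
    ∀ᶠ t in 𝓝[>] (0 : ℝ), x + t • v ∈ C ∧ 0 < t).exists
  exact ⟨_, hxt, by simpa [g.apply_add_smul, hv] using ht⟩

lemma boundedCount_inter_Ioi_add_boundedCount_inter_Iio_of_inter_eq_empty {X : Type*}
    [PseudoMetricSpace X] {C : Set X} (hC : IsPreconnected C) {g : X → ℝ} (hg : Continuous g)
    (hD : C ∩ g ⁻¹' {0} = ∅) :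
    boundedCount (C ∩ g ⁻¹' Ioi 0) + boundedCount (C ∩ g ⁻¹' Iio 0) =
      boundedCount C + boundedCount (C ∩ g ⁻¹' {0}) := by
  have hcover : C ⊆ g ⁻¹' Ioi 0 ∪ g ⁻¹' Iio 0 := fun y hy =>
    (lt_or_gt_of_ne fun h => hD.subset ⟨hy, h⟩).symm
  have hdisj := (Ioi_disjoint_Iio_same (a := (0 : ℝ))).preimage g
  rcases hC.subset_or_subset (isOpen_Ioi.preimage hg) (isOpen_Iio.preimage hg) hdisj hcover
    with h | h
  · rw [inter_eq_left.2 h, hD, (hdisj.mono_left h).inter_eq]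
  · rw [inter_eq_left.2 h, hD, (hdisj.symm.mono_left h).inter_eq, add_comm]

lemma isBounded_inter_preimage_iff [FiniteDimensional ℝ E] (hC : Convex ℝ C) (hCo : IsOpen C)
    {g : E →ᵃ[ℝ] ℝ} (hg : g.linear ≠ 0) {T : Set ℝ} (hT : Convex ℝ T)
    (hTo : IsOpen T ∨ IsClosed T) {y : E} (hy : y ∈ C) (hyT : g y ∈ T) :
    IsBounded (C ∩ g ⁻¹' T) ↔ ∀ v ∈ recessionCone C, g.linear v ∈ recessionCone T → v = 0 := by
  have hgc : Continuous g := g.continuous_of_finiteDimensional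
  rw [isBounded_inter_iff hC hCo (hT.affine_preimage g)
    (hTo.imp (·.preimage hgc) (·.preimage hgc)) ⟨hy, hyT⟩,
    recessionCone_preimage (g.linear_surjective_iff.1 (LinearMap.surjective hg))]
  rfl

lemma ite_add_ite_eq_ite_and_add_ite_or (P Q : Prop) [Decidable P] [Decidable Q] :
    ((if P then 1 else 0) + (if Q then 1 else 0) : ℕ) =
      (if P ∧ Q then 1 else 0) + (if P ∨ Q then 1 else 0) := by
  by_cases P <;> by_cases Q <;> simp [*]

theorem boundedCount_inter_Ioi_add_boundedCount_inter_Iio [FiniteDimensional ℝ E]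
    (hC : Convex ℝ C) (hCo : IsOpen C) (hline : ∀ x ∈ C, ∀ v, (∀ t : ℝ, x + t • v ∈ C) → v = 0)
    {g : E →ᵃ[ℝ] ℝ} (hg : g.linear ≠ 0) :
    boundedCount (C ∩ g ⁻¹' Ioi 0) + boundedCount (C ∩ g ⁻¹' Iio 0) =
      boundedCount C + boundedCount (C ∩ g ⁻¹' {0}) := by
  classical
  rcases (C ∩ g ⁻¹' {0}).eq_empty_or_nonempty with hD | ⟨x, hxC, hx0⟩
  · exact boundedCount_inter_Ioi_add_boundedCount_inter_Iio_of_inter_eq_empty hC.isPreconnected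
      g.continuous_of_finiteDimensional hD
  have hx0 : g x = 0 := hx0
  obtain ⟨yp, hyp, hgyp⟩ := exists_mem_lt_of_isOpen hCo hxC hg
  obtain ⟨yn, hyn, hgyn⟩ := exists_mem_lt_of_isOpen hCo hxC (g := -g) (by simpa using hg)
  replace hgyp : 0 < g yp := by rwa [hx0] at hgyp
  replace hgyn : g yn < 0 := by simpa [hx0] using hgyn
  have hP := isBounded_inter_preimage_iff hC hCo hg (convex_Ioi 0) (.inl isOpen_Ioi) hyp hgyp
  have hN := isBounded_inter_preimage_iff hC hCo hg (convex_Iio 0) (.inl isOpen_Iio) hyn hgyn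
  have hZ := isBounded_inter_preimage_iff hC hCo hg (convex_singleton 0)
    (.inr isClosed_singleton) hxC hx0
  have hA := isBounded_inter_preimage_iff hC hCo hg convex_univ (.inl isOpen_univ) hxC trivial
  simp only [Real.recessionCone_Ioi, Real.recessionCone_Iio, recessionCone_singleton,
    recessionCone_univ, mem_Ici, mem_Iic, mem_singleton_iff, mem_univ, forall_const,
    preimage_univ, inter_univ] at hP hN hZ hA
  set R := recessionCone C
  set a := g.linear
  have hsplit : (∀ v ∈ R, v = 0) ↔ (∀ v ∈ R, 0 ≤ a v → v = 0) ∧ (∀ v ∈ R, a v ≤ 0 → v = 0) :=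
    ⟨fun h => ⟨fun v hv _ => h v hv, fun v hv _ => h v hv⟩,
      fun h v hv => (le_total 0 (a v)).elim (h.1 v hv) (h.2 v hv)⟩
  have hpointed : ∀ v ∈ R, -v ∈ R → v = 0 := fun v hv hv' =>
    hline x hxC v (mem_recessionCone_of_neg_mem hxC hv hv')
  have hcut : (∀ v ∈ R, a v = 0 → v = 0) ↔
      (∀ v ∈ R, 0 ≤ a v → v = 0) ∨ (∀ v ∈ R, a v ≤ 0 → v = 0) :=
    ⟨forall_nonneg_eq_zero_or_forall_nonpos_eq_zero hpointed a, fun h => h.elim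
      (fun h v hv hav => h v hv hav.ge) (fun h v hv hav => h v hv hav.le)⟩
  simp only [boundedCount, show (C ∩ g ⁻¹' Ioi 0).Nonempty from ⟨yp, hyp, hgyp⟩,
    show (C ∩ g ⁻¹' Iio 0).Nonempty from ⟨yn, hyn, hgyn⟩,
    show (C ∩ g ⁻¹' {0}).Nonempty from ⟨x, hxC, hx0⟩, show C.Nonempty from ⟨x, hxC⟩, true_and]
  simp_rw [hP, hN, hZ, hA, hsplit, hcut]
  exact ite_add_ite_eq_ite_and_add_ite_or _ _

end HyperplaneCut

section Arrangement

open Module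

variable {V : Type*} [NormedAddCommGroup V] [NormedSpace ℝ V] {ι : Type*}

def halfLine (s : Bool) : Set ℝ := if s then Ioi 0 else Iio 0

lemma isOpen_halfLine (s : Bool) : IsOpen (halfLine s) := by
  cases s
  exacts [isOpen_Iio, isOpen_Ioi]

lemma convex_halfLine (s : Bool) : Convex ℝ (halfLine s) := by
  cases s
  exacts [convex_Iio 0, convex_Ioi 0]

lemma zero_notMem_halfLine (s : Bool) : (0 : ℝ) ∉ halfLine s := by
  cases s <;> simp [halfLine]

lemma mem_halfLine_decide {y : ℝ} (hy : y ≠ 0) : y ∈ halfLine (decide (0 < y)) := by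
  rcases hy.lt_or_gt with h | h
  · simp [halfLine, h, h.not_gt]
  · simp [halfLine, h]

lemma eq_of_mem_halfLine {y : ℝ} {s s' : Bool} (hs : y ∈ halfLine s) (hs' : y ∈ halfLine s') :
    s = s' := by
  cases s <;> cases s' <;> simp_all [halfLine] <;> linarith

def cell (f : ι → V →ᵃ[ℝ] ℝ) (σ : ι → Bool) : Set V := ⋂ i, f i ⁻¹' halfLine (σ i)

variable {f : ι → V →ᵃ[ℝ] ℝ} {σ : ι → Bool}

lemma convex_cell (f : ι → V →ᵃ[ℝ] ℝ) (σ : ι → Bool) : Convex ℝ (cell f σ) :=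
  convex_iInter fun i => (convex_halfLine _).affine_preimage (f i)

lemma isOpen_cell [Finite ι] [FiniteDimensional ℝ V] (f : ι → V →ᵃ[ℝ] ℝ) (σ : ι → Bool) :
    IsOpen (cell f σ) :=
  isOpen_iInter_of_finite fun i =>
    (isOpen_halfLine _).preimage (f i).continuous_of_finiteDimensional

lemma mem_cell_decide {x : V} (hx : ∀ i, f i x ≠ 0) : x ∈ cell f (fun i => decide (0 < f i x)) :=
  mem_iInter.2 fun i => mem_halfLine_decide (hx i)

lemma eq_of_mem_cell {x : V} {τ : ι → Bool} (hσ : x ∈ cell f σ) (hτ : x ∈ cell f τ) : σ = τ :=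
  funext fun i => eq_of_mem_halfLine (mem_iInter.1 hσ i) (mem_iInter.1 hτ i)

lemma cell_subset (f : ι → V →ᵃ[ℝ] ℝ) (σ : ι → Bool) : cell f σ ⊆ {x | ∀ i, f i x ≠ 0} :=
  fun _ hx i h => zero_notMem_halfLine (σ i) (h ▸ mem_iInter.1 hx i)

lemma cell_comp {W : Type*} [NormedAddCommGroup W] [NormedSpace ℝ W] (e : W →ᵃ[ℝ] V) :
    cell (fun i => (f i).comp e) σ = e ⁻¹' cell f σ := by
  ext
  simp [cell]

lemma cell_snoc {m : ℕ} (f : Fin m → V →ᵃ[ℝ] ℝ) (g : V →ᵃ[ℝ] ℝ) (σ : Fin m → Bool) (s : Bool) :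
    cell (Fin.snoc f g : Fin (m + 1) → V →ᵃ[ℝ] ℝ) (Fin.snoc σ s) = cell f σ ∩ g ⁻¹' halfLine s := by
  ext
  simp [cell, Fin.forall_fin_succ']

theorem connectedComponentIn_eq_cell [Fintype ι] [FiniteDimensional ℝ V] {x : V}
    (hx : x ∈ cell f σ) : connectedComponentIn {x | ∀ i, f i x ≠ 0} x = cell f σ := by
  refine subset_antisymm ?_
    ((convex_cell f σ).isPreconnected.subset_connectedComponentIn hx (cell_subset f σ))
  have hcover : {x | ∀ i, f i x ≠ 0} ⊆ cell f σ ∪ ⋃ τ, ⋃ (_ : τ ≠ σ), cell f τ := fun y hy => by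
    by_cases h : (fun i => decide (0 < f i y)) = σ
    · exact .inl (h ▸ mem_cell_decide hy)
    · exact .inr (mem_iUnion₂.2 ⟨_, h, mem_cell_decide hy⟩)
  exact isPreconnected_connectedComponentIn.subset_left_of_subset_union (isOpen_cell f σ)
    (isOpen_iUnion fun τ => isOpen_iUnion fun _ => isOpen_cell f τ)
    (disjoint_iUnion₂_right.2 fun τ hτ => disjoint_left.2 fun y hyσ hyτ =>
      hτ (eq_of_mem_cell hyτ hyσ))
    ((connectedComponentIn_subset _ _).trans hcover)
    ⟨x, mem_connectedComponentIn (cell_subset f σ hx), hx⟩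

theorem ncard_boundedComponents [Fintype ι] [DecidableEq ι] [FiniteDimensional ℝ V]
    (f : ι → V →ᵃ[ℝ] ℝ) :
    {C : Set V | (∃ x ∈ {x | ∀ i, f i x ≠ 0}, C = connectedComponentIn {x | ∀ i, f i x ≠ 0} x) ∧
      IsBounded C}.ncard = ∑ σ, boundedCount (cell f σ) := by
  classical
  have himage : {C : Set V | (∃ x ∈ {x | ∀ i, f i x ≠ 0},
      C = connectedComponentIn {x | ∀ i, f i x ≠ 0} x) ∧ IsBounded C} =
      cell f '' {σ | (cell f σ).Nonempty ∧ IsBounded (cell f σ)} := by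
    ext C
    constructor
    · rintro ⟨⟨x, hx, rfl⟩, hb⟩
      rw [connectedComponentIn_eq_cell (mem_cell_decide hx)] at hb ⊢
      exact ⟨_, ⟨⟨x, mem_cell_decide hx⟩, hb⟩, rfl⟩
    · rintro ⟨σ, ⟨⟨x, hx⟩, hb⟩, rfl⟩
      exact ⟨⟨x, cell_subset f σ hx, (connectedComponentIn_eq_cell hx).symm⟩, hb⟩
  rw [himage, InjOn.ncard_image fun σ hσ τ _ h =>
    eq_of_mem_cell hσ.1.some_mem (h ▸ hσ.1.some_mem), ← Finset.coe_filter_univ, ncard_coe_finset,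
    Finset.card_filter]
  rfl

end Arrangement

section GeneralPosition

open Module

variable {V : Type*} [NormedAddCommGroup V] [NormedSpace ℝ V] {ι : Type*}

/-- General position, with the codimension condition on `J.card ≤ finrank ℝ V` hyperplanes
expressed as independence of their normals, i.e. surjectivity of `x ↦ (f i x)_{i ∈ J}`. -/
structure IsGeneralPosition (f : ι → V →ᵃ[ℝ] ℝ) : Prop where
  exists_eq : ∀ J : Finset ι, J.card ≤ finrank ℝ V → ∀ y : ι → ℝ, ∃ x, ∀ i ∈ J, f i x = y i
  not_exists_common_zero : ∀ J : Finset ι, finrank ℝ V < J.card → ¬∃ x, ∀ i ∈ J, f i x = 0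

variable {f : ι → V →ᵃ[ℝ] ℝ}

lemma isGeneralPosition_of_finrank_iInf_ker [FiniteDimensional ℝ V]
    (hrank : ∀ J : Finset ι, 1 ≤ J.card → J.card ≤ finrank ℝ V →
      finrank ℝ ↥(⨅ i ∈ J, LinearMap.ker (f i).linear) = finrank ℝ V - J.card)
    (hempty : ∀ J : Finset ι, finrank ℝ V < J.card → ¬∃ x, ∀ i ∈ J, f i x = 0) :
    IsGeneralPosition f where
  exists_eq J hJ y := by
    rcases J.eq_empty_or_nonempty with rfl | hJne
    · simp
    let L : V →ₗ[ℝ] (J → ℝ) := LinearMap.pi fun i => (f i).linear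
    have hker : LinearMap.ker L = ⨅ i ∈ J, LinearMap.ker (f i).linear := by
      ext v
      simp [L, funext_iff]
    have hrange : LinearMap.range L = ⊤ := by
      refine Submodule.eq_top_of_finrank_eq ?_
      have := L.finrank_range_add_finrank_ker
      rw [hker, hrank J hJne.card_pos hJ] at this
      simp only [finrank_fintype_fun_eq_card, Fintype.card_coe]
      omega
    obtain ⟨v, hv⟩ := LinearMap.range_eq_top.1 hrange fun i => y i - f i 0
    refine ⟨v, fun i hi => ?_⟩
    have := congrFun hv ⟨i, hi⟩
    simp only [L, LinearMap.pi_apply] at this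
    rw [(f i).decomp, Pi.add_apply, this, sub_add_cancel]
  not_exists_common_zero := hempty

namespace IsGeneralPosition

variable (hf : IsGeneralPosition f)
include hf

lemma exists_linear_eq {J : Finset ι} (hJ : J.card ≤ finrank ℝ V) (y : ι → ℝ) :
    ∃ v, ∀ i ∈ J, (f i).linear v = y i := by
  obtain ⟨x, hx⟩ := hf.exists_eq J hJ fun i => y i + f i 0
  exact ⟨x, fun i hi => by rw [(f i).decomp']; simp [hx i hi]⟩

lemma comp_embedding {κ : Type*} (e : κ ↪ ι) : IsGeneralPosition (f ∘ e) where
  exists_eq J hJ y := by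
    obtain ⟨x, hx⟩ := hf.exists_eq (J.map e) (by rwa [Finset.card_map]) (Function.extend e y 0)
    exact ⟨x, fun j hj => by
      simpa [e.injective.extend_apply] using hx (e j) (Finset.mem_map_of_mem e hj)⟩
  not_exists_common_zero J hJ := fun ⟨x, hx⟩ =>
    hf.not_exists_common_zero (J.map e) (by rwa [Finset.card_map]) ⟨x, by simpa using hx⟩

lemma linear_ne_zero (hV : 0 < finrank ℝ V) (i : ι) : (f i).linear ≠ 0 := by
  obtain ⟨v, hv⟩ := hf.exists_linear_eq (J := {i}) (by simpa) fun _ => 1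
  intro h0
  simpa [h0] using hv i (Finset.mem_singleton_self i)

lemma eq_zero_of_forall_linear_eq_zero [Fintype ι] [FiniteDimensional ℝ V]
    (hcard : finrank ℝ V ≤ Fintype.card ι) {v : V} (hv : ∀ i, (f i).linear v = 0) : v = 0 := by
  classical
  obtain ⟨J, -, hJ⟩ := Finset.exists_subset_card_eq (s := Finset.univ) (by simpa using hcard)
  let L : V →ₗ[ℝ] (J → ℝ) := LinearMap.pi fun i => (f i).linear
  have hsurj : Function.Surjective L := fun z => by
    obtain ⟨w, hw⟩ := hf.exists_linear_eq hJ.le fun i => if hi : i ∈ J then z ⟨i, hi⟩ else 0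
    exact ⟨w, funext fun i => by simpa [L] using hw i i.2⟩
  refine (LinearMap.injective_iff_surjective_of_finrank_eq_finrank (by simp [hJ])).2 hsurj ?_
  ext i
  simp [L, hv]

lemma boundedCount_cell_eq_zero [Fintype ι] [FiniteDimensional ℝ V] (hV : 0 < finrank ℝ V)
    (hcard : Fintype.card ι ≤ finrank ℝ V) (σ : ι → Bool) : boundedCount (cell f σ) = 0 := by
  rw [boundedCount, if_neg]
  rintro ⟨⟨x, hx⟩, hb⟩
  rcases isEmpty_or_nonempty ι with hι | ⟨⟨i₀⟩⟩
  · have : Nontrivial V := Module.finrank_pos_iff.1 hV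
    exact NormedSpace.unbounded_univ ℝ V (by simpa [cell] using hb)
  obtain ⟨v, hv⟩ := hf.exists_linear_eq (J := Finset.univ) (by simpa) fun i => if σ i then 1 else -1
  refine not_isBounded_of_mem_recessionCone (v := v) hx (fun h0 => ?_)
    (iInter_recessionCone_subset _ (mem_iInter.2 fun i =>
      preimage_recessionCone_subset (f i) _ ?_)) hb
  · have := hv i₀ (Finset.mem_univ _)
    rw [h0, map_zero] at this
    split_ifs at this <;> norm_num at this
  · rw [mem_preimage, hv i (Finset.mem_univ i)]
    cases σ i <;> simp [halfLine, Real.recessionCone_Ioi, Real.recessionCone_Iio]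

end IsGeneralPosition

end GeneralPosition

section Counting

open Module

variable {V : Type*} [NormedAddCommGroup V] [NormedSpace ℝ V]

def affineInclusion (x₀ : V) (W : Submodule ℝ V) : W →ᵃ[ℝ] V :=
  (AffineEquiv.constVAdd ℝ V x₀).toAffineMap.comp W.subtype.toAffineMap

@[simp]
lemma affineInclusion_apply (x₀ : V) (W : Submodule ℝ V) (w : W) :
    affineInclusion x₀ W w = x₀ + w :=
  rfl

lemma isometry_affineInclusion (x₀ : V) (W : Submodule ℝ V) : Isometry (affineInclusion x₀ W) :=
  Isometry.of_dist_eq fun _ _ => by simp [dist_eq_norm]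

lemma range_affineInclusion_ker {g : V →ᵃ[ℝ] ℝ} {x₀ : V} (hx₀ : g x₀ = 0) :
    range (affineInclusion x₀ (LinearMap.ker g.linear)) = g ⁻¹' {0} := by
  ext x
  constructor
  · rintro ⟨w, rfl⟩
    simpa [hx₀, LinearMap.mem_ker.1 w.2] using g.apply_add_smul x₀ w 1
  · intro hx
    refine ⟨⟨x - x₀, ?_⟩, by simp⟩
    rw [LinearMap.mem_ker, ← vsub_eq_sub, g.linearMap_vsub, vsub_eq_sub, hx₀, sub_zero]
    exact hx

lemma sum_boundedCount_cell_snoc [FiniteDimensional ℝ V] {m : ℕ} (f : Fin m → V →ᵃ[ℝ] ℝ)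
    (g : V →ᵃ[ℝ] ℝ) (hf : ∀ v, (∀ i, (f i).linear v = 0) → v = 0) (hg : g.linear ≠ 0) :
    ∑ σ, boundedCount (cell (Fin.snoc f g : Fin (m + 1) → V →ᵃ[ℝ] ℝ) σ) =
      ∑ σ, boundedCount (cell f σ) + ∑ σ, boundedCount (cell f σ ∩ g ⁻¹' {0}) := by
  rw [← Fintype.sum_equiv (Fin.snocEquiv fun _ => Bool)
      (fun sσ => boundedCount (cell (Fin.snoc f g) (Fin.snoc sσ.2 sσ.1))) _ fun _ => rfl,
    Fintype.sum_prod_type, Fintype.sum_bool, ← Finset.sum_add_distrib, ← Finset.sum_add_distrib]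
  refine Finset.sum_congr rfl fun σ _ => ?_
  simp only [cell_snoc, halfLine, if_true, Bool.false_eq_true, if_false]
  refine boundedCount_inter_Ioi_add_boundedCount_inter_Iio (convex_cell f σ) (isOpen_cell f σ)
    (fun x _ v hline => hf v fun i => by_contra fun hv => ?_) hg
  have := mem_iInter.1 (hline (-(f i x) / (f i).linear v)) i
  rw [mem_preimage, (f i).apply_add_smul, smul_eq_mul, div_mul_cancel₀ _ hv,
    add_neg_cancel] at this
  exact zero_notMem_halfLine _ this

lemma sum_boundedCount_cell_inter_eq {ι : Type*} [Fintype ι] [DecidableEq ι]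
    (f : ι → V →ᵃ[ℝ] ℝ) {g : V →ᵃ[ℝ] ℝ} {x₀ : V} (hx₀ : g x₀ = 0) :
    ∑ σ, boundedCount (cell f σ ∩ g ⁻¹' {0}) =
      ∑ σ, boundedCount
        (cell (fun i => (f i).comp (affineInclusion x₀ (LinearMap.ker g.linear))) σ) := by
  refine Fintype.sum_congr _ _ fun σ => ?_
  rw [cell_comp, ← (isometry_affineInclusion x₀ (LinearMap.ker g.linear)).boundedCount_image,
    image_preimage_eq_inter_range, range_affineInclusion_ker hx₀]

namespace IsGeneralPosition

lemma restrict_snoc [FiniteDimensional ℝ V] {m : ℕ} {f : Fin m → V →ᵃ[ℝ] ℝ} {g : V →ᵃ[ℝ] ℝ}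
    (hf : IsGeneralPosition (Fin.snoc f g : Fin (m + 1) → V →ᵃ[ℝ] ℝ)) (hg : g.linear ≠ 0)
    {x₀ : V} (hx₀ : g x₀ = 0) :
    IsGeneralPosition fun i => (f i).comp (affineInclusion x₀ (LinearMap.ker g.linear)) := by
  have hrank := Module.Dual.finrank_ker_add_one_of_ne_zero hg
  have hcard (J : Finset (Fin m)) :
      (insert (Fin.last m) (J.map Fin.castSuccEmb)).card = J.card + 1 := by
    rw [Finset.card_insert_of_notMem (by simp [Fin.castSucc_ne_last]), Finset.card_map]
  constructor
  · intro J hJ y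
    obtain ⟨x, hx⟩ := hf.exists_eq (insert (Fin.last m) (J.map Fin.castSuccEmb))
      (by rw [hcard]; omega) (Fin.snoc y 0)
    simp only [Finset.forall_mem_insert, Finset.forall_mem_map, Fin.castSuccEmb_apply,
      Fin.snoc_last, Fin.snoc_castSucc] at hx
    obtain ⟨w, rfl⟩ : x ∈ range (affineInclusion x₀ (LinearMap.ker g.linear)) := by
      rw [range_affineInclusion_ker hx₀]
      exact hx.1
    exact ⟨w, hx.2⟩
  · rintro J hJ ⟨w, hw⟩
    refine hf.not_exists_common_zero (insert (Fin.last m) (J.map Fin.castSuccEmb))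
      (by rw [hcard]; omega) ⟨affineInclusion x₀ _ w, ?_⟩
    simp only [Finset.forall_mem_insert, Finset.forall_mem_map, Fin.castSuccEmb_apply,
      Fin.snoc_last, Fin.snoc_castSucc]
    exact ⟨(range_affineInclusion_ker hx₀).subset (mem_range_self w), hw⟩

lemma sum_boundedCount_cell_of_finrank_eq_zero {ι : Type*} [Fintype ι] [DecidableEq ι]
    [FiniteDimensional ℝ V] {f : ι → V →ᵃ[ℝ] ℝ} (hf : IsGeneralPosition f) (hV : finrank ℝ V = 0) :
    ∑ σ, boundedCount (cell f σ) = 1 := by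
  have : Subsingleton V := Module.finrank_zero_iff.1 hV
  have h0 : ∀ i, f i 0 ≠ 0 := fun i h0 =>
    hf.not_exists_common_zero {i} (by simp [hV]) ⟨0, by simpa using h0⟩
  have hne : (cell f fun i => decide (0 < f i 0)).Nonempty := ⟨0, mem_cell_decide h0⟩
  rw [Finset.sum_eq_single (fun i => decide (0 < f i 0))]
  · simp [boundedCount, hne, (Set.toFinite _).isBounded]
  · intro σ _ hσ
    rw [boundedCount, if_neg]
    rintro ⟨⟨x, hx⟩, -⟩
    exact hσ (eq_of_mem_cell hx (Subsingleton.elim 0 x ▸ mem_cell_decide h0))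
  · simp

theorem sum_boundedCount_cell {p : ℕ} [FiniteDimensional ℝ V] {f : Fin p → V →ᵃ[ℝ] ℝ}
    (hf : IsGeneralPosition f) :
    ∑ σ, boundedCount (cell f σ) = (p - 1).choose (finrank ℝ V) := by
  induction p using Nat.strong_induction_on generalizing V with
  | _ p ih =>
  rcases Nat.eq_zero_or_pos (finrank ℝ V) with hV | hV
  · rw [hf.sum_boundedCount_cell_of_finrank_eq_zero hV, hV, Nat.choose_zero_right]
  rcases le_or_gt p (finrank ℝ V) with hp | hp
  · rw [Finset.sum_eq_zero fun σ _ => hf.boundedCount_cell_eq_zero hV (by simpa) σ,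
      Nat.choose_eq_zero_of_lt (by omega)]
  obtain ⟨m, rfl⟩ : ∃ m, p = m + 1 := ⟨p - 1, by omega⟩
  obtain ⟨f, g, rfl⟩ : ∃ f' g, (Fin.snoc f' g : Fin (m + 1) → V →ᵃ[ℝ] ℝ) = f :=
    ⟨Fin.init f, f (Fin.last m), Fin.snoc_init_self f⟩
  have hdel : IsGeneralPosition f := by
    simpa [Function.comp_def] using hf.comp_embedding Fin.castSuccEmb
  have hg : g.linear ≠ 0 := by simpa using hf.linear_ne_zero hV (Fin.last m)
  obtain ⟨x₀, hx₀⟩ := hf.exists_eq {Fin.last m} (by rw [Finset.card_singleton]; omega) 0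
  replace hx₀ : g x₀ = 0 := by simpa using hx₀
  rw [sum_boundedCount_cell_snoc f g
      (fun v => hdel.eq_zero_of_forall_linear_eq_zero (by rw [Fintype.card_fin]; omega)) hg,
    sum_boundedCount_cell_inter_eq f hx₀, ih m (by omega) hdel,
    ih m (by omega) (hf.restrict_snoc hg hx₀), ← Module.Dual.finrank_ker_add_one_of_ne_zero hg]
  obtain ⟨k, rfl⟩ : ∃ k, m = k + 1 := ⟨m - 1, by omega⟩
  rw [Nat.add_sub_cancel, Nat.add_sub_cancel, Nat.choose_succ_succ', add_comm]

end IsGeneralPosition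

end Counting

theorem bounded_regions_general_position_general (n p : ℕ)
    (f : Fin p → ((Fin n → ℝ) →ᵃ[ℝ] ℝ))
    (hgen : ∀ J : Finset (Fin p), 1 ≤ J.card → J.card ≤ n →
      (∃ x, ∀ i ∈ J, f i x = 0) ∧
        Module.finrank ℝ ↥(⨅ i ∈ J, LinearMap.ker (f i).linear) = n - J.card)
    (hgen' : ∀ J : Finset (Fin p), n < J.card → ¬∃ x, ∀ i ∈ J, f i x = 0) :
    letI M : Set (Fin n → ℝ) := {x | ∀ i, f i x ≠ 0}
    {C : Set (Fin n → ℝ) |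
        (∃ x ∈ M, C = connectedComponentIn M x) ∧ Bornology.IsBounded C}.ncard =
      (p - 1).choose n := by
  have hn : Module.finrank ℝ (Fin n → ℝ) = n := Module.finrank_fin_fun ℝ
  have hf : IsGeneralPosition f := isGeneralPosition_of_finrank_iInf_ker
    (by simpa only [hn] using fun J h1 h2 => (hgen J h1 h2).2) (by simpa only [hn] using hgen')
  rw [ncard_boundedComponents, hf.sum_boundedCount_cell, hn]

/-- The number of bounded connected components of the complement of an arrangement of
`p` affine hyperplanes in general position in `ℝⁿ` is `C(p−1, n)`. -/
theorem bounded_regions_general_position (n p : ℕ)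
    (f : Fin p → ((Fin n → ℝ) →ᵃ[ℝ] ℝ))
    (hf : ∀ i, (f i).linear ≠ 0)
    (hgen : ∀ J : Finset (Fin p), 1 ≤ J.card → J.card ≤ n →
      (∃ x, ∀ i ∈ J, f i x = 0) ∧
        Module.finrank ℝ ↥(⨅ i ∈ J, LinearMap.ker (f i).linear) = n - J.card)
    (hgen' : ∀ J : Finset (Fin p), n < J.card → ¬∃ x, ∀ i ∈ J, f i x = 0) :
    letI M : Set (Fin n → ℝ) := {x | ∀ i, f i x ≠ 0}
    {C : Set (Fin n → ℝ) |
        (∃ x ∈ M, C = connectedComponentIn M x) ∧ Bornology.IsBounded C}.ncard =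
      (p - 1).choose n :=
  bounded_regions_general_position_general n p f hgen hgen'
end
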